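/- arXiv:1507.06587 — 8 statements merged into one kernel-verified Lean document; each statement's English description precedes it below -/
import Mathlib

section
/- Let X and Y be sets. Suppose for every set Z there is a bijection α_Z from the set of injections X ↪ Z to the set of injections Y ↪ Z, natural with respect to injections Z ↪ Z' (i.e., α_{Z'}(f ∘ c) = f ∘ α_Z(c) for every injection f : Z ↪ Z'). Then there exists a bijection β : Y → X such that α_Z(c) = c ∘ β for all Z and all injections c : X ↪ Z. -/
universe u

theorem yoneda_for_injections {X Y : Type u}
    (α : ∀ Z : Type u, (X ↪ Z) ≃ (Y ↪ Z))
    (nat : ∀ (Z Z' : Type u) (f : Z ↪ Z') (c : X ↪ Z),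
      α Z' (c.trans f) = (α Z c).trans f) :
    ∃ β : Y ≃ X, ∀ (Z : Type u) (c : X ↪ Z), α Z c = β.toEmbedding.trans c := by
  set g : Y ↪ X := α X (Function.Embedding.refl X) with hg
  set h : X ↪ Y := (α Y).symm (Function.Embedding.refl Y) with hh
  -- key: α Z c = g.trans c
  have key : ∀ (Z : Type u) (c : X ↪ Z), α Z c = g.trans c := by
    intro Z c
    have := nat X Z c (Function.Embedding.refl X)
    simpa using this
  -- symm naturality
  have nat' : ∀ (Z Z' : Type u) (f : Z ↪ Z') (d : Y ↪ Z),
      (α Z').symm (d.trans f) = ((α Z).symm d).trans f := by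
    intro Z Z' f d
    apply (α Z').injective
    rw [nat Z Z' f ((α Z).symm d)]
    simp
  have key' : ∀ (Z : Type u) (d : Y ↪ Z), (α Z).symm d = h.trans d := by
    intro Z d
    have := nat' Y Z d (Function.Embedding.refl Y)
    simpa using this
  have left : ∀ y, h (g y) = y := by
    intro y
    have : α Y h = Function.Embedding.refl Y := by
      rw [hh]; simp
    rw [key Y h] at this
    exact DFunLike.congr_fun this y
  have right : ∀ x, g (h x) = x := by
    intro x
    have : (α X).symm g = Function.Embedding.refl X := by
      rw [hg]; simp
    rw [key' X g] at this
    exact DFunLike.congr_fun this x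
  refine ⟨⟨g, h, left, right⟩, ?_⟩
  intro Z c
  rw [key Z c]
  rfl
end

section
/- Let X and Y be sets. If for every set Z there is a natural (with respect to injections Z ↪ Z') bijection between injections X ↪ Z and injections Y ↪ Z, then X and Y have the same cardinality. -/
universe u

theorem natural_bijection_of_injections_implies_equiv {X Y : Type u}
    (α : ∀ Z : Type u, (X ↪ Z) ≃ (Y ↪ Z))
    (nat : ∀ (Z Z' : Type u) (f : Z ↪ Z') (c : X ↪ Z),
      α Z' (c.trans f) = (α Z c).trans f) :
    Nonempty (X ≃ Y) := by
  exact Function.Embedding.antisymm ((α Y).symm (Function.Embedding.refl Y))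
    (α X (Function.Embedding.refl X))
end

section
/- (Relative Cantor–Bernstein–Schröder theorem) Let f : X₁ → X₂ and g : Y₁ → Y₂ be maps of sets, and let i₁ : X₁ → Y₁, i₂ : X₂ → Y₂, j₁ : Y₁ → X₁, j₂ : Y₂ → X₂ be injections with g ∘ i₁ = i₂ ∘ f and f ∘ j₁ = j₂ ∘ g. Assume moreover that for all subsets Z ⊆ X₂ and W ⊆ Y₂, g⁻¹(i₂(Z)) = i₁(f⁻¹(Z)) and f⁻¹(j₂(W)) = j₁(g⁻¹(W)). Then there exist bijections r₁ : X₁ → Y₁ and r₂ : X₂ → Y₂ with g ∘ r₁ = r₂ ∘ f. -/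
open Set Function

theorem cbs_aux {X Y : Type*} {i : X → Y} {j : Y → X}
    (hi : Function.Injective i) (hj : Function.Injective j) (A : Set X)
    (hA : Aᶜ = j '' (i '' A)ᶜ) :
    ∃ h : X ≃ Y, (∀ x ∈ A, h x = i x) ∧ (∀ x ∉ A, j (h x) = x) := by
  classical
  have key : ∀ x ∉ A, ∃ y, y ∉ i '' A ∧ j y = x := by
    intro x hx
    have : x ∈ j '' (i '' A)ᶜ := hA ▸ hx
    obtain ⟨y, hy, e⟩ := this
    exact ⟨y, hy, e⟩
  let h : X → Y := fun x => if hx : x ∈ A then i x else (key x hx).choose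
  have hmem : ∀ x (hx : x ∉ A), h x ∉ i '' A ∧ j (h x) = x := by
    intro x hx
    simp only [h, dif_neg hx]
    exact (key x hx).choose_spec
  have hin : ∀ x (hx : x ∈ A), h x = i x := fun x hx => dif_pos hx
  have hinj : Function.Injective h := by
    intro x x' e
    by_cases hx : x ∈ A <;> by_cases hx' : x' ∈ A
    · rw [hin x hx, hin x' hx'] at e; exact hi e
    · refine absurd ?_ (hmem x' hx').1
      rw [← e, hin x hx]; exact mem_image_of_mem i hx
    · refine absurd ?_ (hmem x hx).1
      rw [e, hin x' hx']; exact mem_image_of_mem i hx'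
    · rw [← (hmem x hx).2, ← (hmem x' hx').2, e]
  have hsurj : Function.Surjective h := by
    intro y
    by_cases hy : y ∈ i '' A
    · obtain ⟨x, hx, rfl⟩ := hy
      exact ⟨x, hin x hx⟩
    · have hjy : j y ∈ Aᶜ := hA ▸ ⟨y, hy, rfl⟩
      refine ⟨j y, hj ?_⟩
      rw [(hmem (j y) hjy).2]
  exact ⟨Equiv.ofBijective h ⟨hinj, hsurj⟩, hin, fun x hx => (hmem x hx).2⟩

theorem relative_cantor_bernstein_schroeder
    {X₁ X₂ Y₁ Y₂ : Type*} (f : X₁ → X₂) (g : Y₁ → Y₂)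
    (i₁ : X₁ → Y₁) (i₂ : X₂ → Y₂) (j₁ : Y₁ → X₁) (j₂ : Y₂ → X₂)
    (hi₁ : Function.Injective i₁) (hi₂ : Function.Injective i₂)
    (hj₁ : Function.Injective j₁) (hj₂ : Function.Injective j₂)
    (hsq₁ : g ∘ i₁ = i₂ ∘ f) (hsq₂ : f ∘ j₁ = j₂ ∘ g)
    (hp₁ : ∀ Z : Set X₂, g ⁻¹' (i₂ '' Z) = i₁ '' (f ⁻¹' Z))
    (hp₂ : ∀ W : Set Y₂, f ⁻¹' (j₂ '' W) = j₁ '' (g ⁻¹' W)) :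
    ∃ (r₁ : X₁ ≃ Y₁) (r₂ : X₂ ≃ Y₂), g ∘ r₁ = r₂ ∘ f := by
  classical
  set F : Set X₂ →o Set X₂ :=
    ⟨fun Z => (j₂ '' (i₂ '' Z)ᶜ)ᶜ, by
      intro Z Z' hZZ
      exact compl_subset_compl.2 (Set.image_mono (compl_subset_compl.2 (Set.image_mono hZZ)))⟩
    with hF
  set A₂ : Set X₂ := OrderHom.lfp F with hA₂def
  have hfix : F A₂ = A₂ := F.map_lfp
  have hA₂ : A₂ᶜ = j₂ '' (i₂ '' A₂)ᶜ := by
    conv_lhs => rw [← hfix]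
    simp [hF]
    exact compl_compl (j₂ '' (i₂ '' A₂)ᶜ)
  set A₁ : Set X₁ := f ⁻¹' A₂ with hA₁def
  have hA₁ : A₁ᶜ = j₁ '' (i₁ '' A₁)ᶜ := by
    calc A₁ᶜ = f ⁻¹' A₂ᶜ := rfl
    _ = f ⁻¹' (j₂ '' (i₂ '' A₂)ᶜ) := by rw [hA₂]
    _ = j₁ '' (g ⁻¹' (i₂ '' A₂)ᶜ) := hp₂ _
    _ = j₁ '' (g ⁻¹' (i₂ '' A₂))ᶜ := rfl
    _ = j₁ '' (i₁ '' A₁)ᶜ := by rw [hp₁]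
  obtain ⟨r₂, hr₂in, hr₂out⟩ := cbs_aux hi₂ hj₂ A₂ hA₂
  obtain ⟨r₁, hr₁in, hr₁out⟩ := cbs_aux hi₁ hj₁ A₁ hA₁
  refine ⟨r₁, r₂, funext fun x => ?_⟩
  by_cases hx : x ∈ A₁
  · simp only [Function.comp_apply, hr₁in x hx, hr₂in (f x) hx]
    exact congrFun hsq₁ x
  · have hfx : f x ∉ A₂ := hx
    apply hj₂
    have h1 : f (j₁ (r₁ x)) = j₂ (g (r₁ x)) := congrFun hsq₂ (r₁ x)
    simp only [Function.comp_apply]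
    rw [← h1, hr₁out x hx, hr₂out (f x) hfx]
end

section
/- If there exist surjective graph homomorphisms φ : G₁ → G₂ and ψ : G₂ → G₁ between (possibly infinite) simple graphs, then for every set X there is a bijection between the proper X-colorings of G₁ and the proper X-colorings of G₂, and these bijections can be chosen naturally with respect to injections of color sets X ↪ Y. -/
/-- The set of proper `X`-colorings of a graph `G`. -/
def Col {V : Type*} (G : SimpleGraph V) (X : Type*) :=
  {c : V → X // ∀ v w, G.Adj v w → c v ≠ c w}

/-- Postcomposition of a proper coloring by an injection of color sets. -/
def Col.map {V : Type*} {G : SimpleGraph V} {X Y : Type*} (f : X ↪ Y)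
    (c : Col G X) : Col G Y :=
  ⟨f ∘ c.1, fun v w h hc => c.2 v w h (f.injective hc)⟩

section SB

variable {A B A' B' : Type*}

/-- The set appearing in the explicit Schröder–Bernstein construction. -/
def sbSet (i : A → B) (j : B → A) : Set A :=
  ⋃ n : ℕ, (j ∘ i)^[n] '' (Set.range j)ᶜ

lemma compl_subset_sbSet (i : A → B) (j : B → A) : (Set.range j)ᶜ ⊆ sbSet i j := by
  intro a ha
  exact Set.mem_iUnion.2 ⟨0, by simpa using ha⟩

lemma sbSet_succ {i : A → B} {j : B → A} {a : A} (h : a ∈ sbSet i j) :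
    j (i a) ∈ sbSet i j := by
  obtain ⟨n, hn⟩ := Set.mem_iUnion.1 h
  obtain ⟨x, hx, hxa⟩ := hn
  refine Set.mem_iUnion.2 ⟨n + 1, ⟨x, hx, ?_⟩⟩
  rw [Function.iterate_succ']
  simp only [Function.comp_apply, hxa]

lemma not_mem_sbSet {i : A → B} {j : B → A} {a : A} (h : a ∉ sbSet i j) :
    ∃ b, j b = a := by
  by_contra hc
  exact h (compl_subset_sbSet i j (fun hr => hc hr))

open Classical in
/-- The explicit Schröder–Bernstein bijection. -/
noncomputable def sbFun (i : A → B) (j : B → A) (a : A) : B :=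
  if h : a ∈ sbSet i j then i a else (not_mem_sbSet h).choose

lemma sbFun_mem {i : A → B} {j : B → A} {a : A} (h : a ∈ sbSet i j) :
    sbFun i j a = i a := by
  rw [sbFun, dif_pos h]

lemma sbFun_not_mem {i : A → B} {j : B → A} {a : A} (h : a ∉ sbSet i j) :
    j (sbFun i j a) = a := by
  rw [sbFun, dif_neg h]
  exact (not_mem_sbSet h).choose_spec

lemma sbFun_bijective {i : A → B} {j : B → A}
    (hi : Function.Injective i) (hj : Function.Injective j) :
    Function.Bijective (sbFun i j) := by
  constructor
  · intro a₁ a₂ hEq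
    by_cases h₁ : a₁ ∈ sbSet i j <;> by_cases h₂ : a₂ ∈ sbSet i j
    · rw [sbFun_mem h₁, sbFun_mem h₂] at hEq; exact hi hEq
    · exfalso
      rw [sbFun_mem h₁] at hEq
      have : j (i a₁) = a₂ := by rw [hEq]; exact sbFun_not_mem h₂
      exact h₂ (this ▸ sbSet_succ h₁)
    · exfalso
      rw [sbFun_mem h₂] at hEq
      have : j (i a₂) = a₁ := by rw [← hEq]; exact sbFun_not_mem h₁
      exact h₁ (this ▸ sbSet_succ h₂)
    · have := sbFun_not_mem h₁
      rw [hEq, sbFun_not_mem h₂] at this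
      exact this.symm
  · intro b
    by_cases h : j b ∈ sbSet i j
    · obtain ⟨n, hn⟩ := Set.mem_iUnion.1 h
      cases n with
      | zero =>
        exfalso
        simp only [Function.iterate_zero, Set.image_id] at hn
        exact hn ⟨b, rfl⟩
      | succ n =>
        rw [Function.iterate_succ', Set.image_comp] at hn
        obtain ⟨a, ha, hab⟩ := hn
        have hS : a ∈ sbSet i j := Set.mem_iUnion.2 ⟨n, ha⟩
        have : i a = b := hj hab
        exact ⟨a, by rw [sbFun_mem hS, this]⟩
    · exact ⟨j b, hj (sbFun_not_mem h)⟩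

lemma mem_sbSet_iff {i : A → B} {j : B → A} {i' : A' → B'} {j' : B' → A'}
    (hi' : Function.Injective i') (hj' : Function.Injective j')
    {F : A → A'} {G : B → B'}
    (hcommi : ∀ a, G (i a) = i' (F a))
    (hcommj : ∀ b, F (j b) = j' (G b))
    (hreflj : ∀ a, (∃ b', j' b' = F a) → ∃ b, j b = a)
    (hrefli : ∀ b, (∃ a', i' a' = G b) → ∃ a, i a = b)
    (a : A) : a ∈ sbSet i j ↔ F a ∈ sbSet i' j' := by
  have fwd : ∀ n : ℕ, ∀ a : A, a ∈ (j ∘ i)^[n] '' (Set.range j)ᶜ →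
      F a ∈ (j' ∘ i')^[n] '' (Set.range j')ᶜ := by
    intro n
    induction n with
    | zero =>
      intro a hn
      simp only [Function.iterate_zero, Set.image_id] at hn ⊢
      intro ⟨b', hb'⟩
      exact hn (hreflj a ⟨b', hb'⟩)
    | succ n ih =>
      intro a hn
      rw [Function.iterate_succ', Set.image_comp] at hn ⊢
      obtain ⟨a₀, ha₀, rfl⟩ := hn
      refine ⟨F a₀, ih a₀ ha₀, ?_⟩
      simp only [Function.comp_apply]
      rw [hcommj, hcommi]
  have bwd : ∀ n : ℕ, ∀ a : A, F a ∈ (j' ∘ i')^[n] '' (Set.range j')ᶜ →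
      a ∈ sbSet i j := by
    intro n
    induction n with
    | zero =>
      intro a hn
      simp only [Function.iterate_zero, Set.image_id] at hn
      refine compl_subset_sbSet i j ?_
      intro ⟨b, hb⟩
      exact hn ⟨G b, by rw [← hcommj, hb]⟩
    | succ n ih =>
      intro a hn
      rw [Function.iterate_succ', Set.image_comp] at hn
      obtain ⟨x, hx, hxa⟩ := hn
      simp only [Function.comp_apply] at hxa
      obtain ⟨b, rfl⟩ := hreflj a ⟨i' x, hxa⟩
      have hGb : G b = i' x := hj' (by rw [← hcommj, hxa])
      obtain ⟨a₀, rfl⟩ := hrefli b ⟨x, hGb.symm⟩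
      have hFa₀ : F a₀ = x := hi' (by rw [← hcommi, hGb])
      have : a₀ ∈ sbSet i j := ih a₀ (by rw [hFa₀]; exact hx)
      exact sbSet_succ this
  constructor
  · intro h
    obtain ⟨n, hn⟩ := Set.mem_iUnion.1 h
    exact Set.mem_iUnion.2 ⟨n, fwd n a hn⟩
  · intro h
    obtain ⟨n, hn⟩ := Set.mem_iUnion.1 h
    exact bwd n a hn

lemma sbFun_natural {i : A → B} {j : B → A} {i' : A' → B'} {j' : B' → A'}
    (hi' : Function.Injective i') (hj' : Function.Injective j')
    {F : A → A'} {G : B → B'}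
    (hcommi : ∀ a, G (i a) = i' (F a))
    (hcommj : ∀ b, F (j b) = j' (G b))
    (hreflj : ∀ a, (∃ b', j' b' = F a) → ∃ b, j b = a)
    (hrefli : ∀ b, (∃ a', i' a' = G b) → ∃ a, i a = b)
    (a : A) : sbFun i' j' (F a) = G (sbFun i j a) := by
  have hmem := mem_sbSet_iff hi' hj' hcommi hcommj hreflj hrefli a
  by_cases h : a ∈ sbSet i j
  · rw [sbFun_mem (hmem.1 h), sbFun_mem h, hcommi]
  · have h' : F a ∉ sbSet i' j' := fun hh => h (hmem.2 hh)
    refine hj' ?_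
    rw [sbFun_not_mem h', ← hcommj, sbFun_not_mem h]

end SB

section Precomp

variable {V W X Y : Type*} {H : SimpleGraph V} {K : SimpleGraph W}

/-- Precomposition of a coloring by a graph homomorphism. -/
def precomp (χ : H →g K) (c : Col K X) : Col H X :=
  ⟨c.1 ∘ χ, fun v w h hc => c.2 _ _ (χ.map_adj h) hc⟩

lemma precomp_injective {χ : H →g K} (hχ : Function.Surjective χ) :
    Function.Injective (precomp (X := X) χ) := by
  intro c₁ c₂ h
  refine Subtype.ext (funext fun w => ?_)
  obtain ⟨v, rfl⟩ := hχ w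
  exact congrFun (congrArg Subtype.val h) v

lemma map_precomp (f : X ↪ Y) (χ : H →g K) (c : Col K X) :
    Col.map f (precomp χ c) = precomp χ (Col.map f c) := rfl

lemma precomp_reflect (f : X ↪ Y) {χ : H →g K} (hχ : Function.Surjective χ)
    (d : Col H X) (h : ∃ c', precomp χ c' = Col.map f d) :
    ∃ c, precomp χ c = d := by
  classical
  obtain ⟨c', hc'⟩ := h
  set t := Function.surjInv hχ with ht
  have hts : ∀ w, χ (t w) = w := Function.surjInv_eq hχ
  have key : ∀ v, c'.1 (χ v) = f (d.1 v) := fun v =>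
    congrFun (congrArg Subtype.val hc') v
  refine ⟨⟨d.1 ∘ t, fun x y hxy hc => ?_⟩, ?_⟩
  · refine c'.2 x y hxy ?_
    have h1 : c'.1 x = f (d.1 (t x)) := by rw [← hts x, key]; rw [hts]
    have h2 : c'.1 y = f (d.1 (t y)) := by rw [← hts y, key]; rw [hts]
    rw [h1, h2]
    exact congrArg f hc
  · refine Subtype.ext (funext fun v => ?_)
    refine f.injective ?_
    show f (d.1 (t (χ v))) = f (d.1 v)
    rw [← key (t (χ v)), hts, key]

end Precomp

theorem cbs_for_chromatic_functors {V₁ V₂ : Type*}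
    (G₁ : SimpleGraph V₁) (G₂ : SimpleGraph V₂)
    (φ : G₁ →g G₂) (hφ : Function.Surjective φ)
    (ψ : G₂ →g G₁) (hψ : Function.Surjective ψ) :
    ∃ e : ∀ X : Type, Col G₁ X ≃ Col G₂ X,
      ∀ (X Y : Type) (f : X ↪ Y) (c : Col G₁ X),
        e Y (Col.map f c) = Col.map f (e X c) := by
  classical
  refine ⟨fun X => Equiv.ofBijective
      (sbFun (precomp (X := X) ψ) (precomp (X := X) φ))
      (sbFun_bijective (precomp_injective hψ) (precomp_injective hφ)), ?_⟩
  intro X Y f c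
  simp only [Equiv.ofBijective_apply]
  exact sbFun_natural (precomp_injective hψ) (precomp_injective hφ)
    (F := Col.map f) (G := Col.map f)
    (fun a => map_precomp f ψ a)
    (fun b => map_precomp f φ b)
    (fun a => precomp_reflect f hφ a)
    (fun b => precomp_reflect f hψ b)
    c
end

section
/- Let G be a connected countable unbounded graph with no cycle of odd length. Then for every set X, the proper X-colorings of G are in bijection with the proper X-colorings of the natural tree T_ℕ, naturally with respect to injections of color sets. -/
/-- The natural tree: vertex set ℕ, edges {n, n+1}. -/
def natTree : SimpleGraph ℕ := SimpleGraph.fromRel (fun m n => n = m + 1)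

namespace ColAux

open SimpleGraph

variable {V : Type}

/-! ### Odd closed walks -/

lemma path_edge_loop {G : SimpleGraph V} {v u : V} (p : G.Walk v u) (hp : p.IsPath)
    (he : s(u, v) ∈ p.edges) : p.length = 1 := by
  cases p with
  | nil => simp at he
  | @cons _ y _ h q =>
    rw [Walk.edges_cons, List.mem_cons] at he
    rcases he with he | he
    · have hy : u = y := by
        rw [Sym2.eq_iff] at he
        rcases he with ⟨h1, h2⟩ | ⟨h1, h2⟩
        · exact h1.trans h2
        · exact h1
      subst hy
      have : q = Walk.nil := (Walk.isPath_iff_eq_nil (p := q)).mp hp.of_cons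
      simp [this]
    · exfalso
      have hv : v ∈ q.support := q.snd_mem_support_of_mem_edges he
      have := hp.support_nodup
      rw [Walk.support_cons, List.nodup_cons] at this
      exact this.1 hv

lemma no_odd_closed_walk {G : SimpleGraph V}
    (hodd : ∀ (v : V) (w : G.Walk v v), w.IsCycle → Even w.length) :
    ∀ (n : ℕ) (u : V) (w : G.Walk u u), w.length = n → ¬ Odd n := by
  classical
  intro n
  induction n using Nat.strong_induction_on with
  | _ n IH =>
    intro u w hlen hoddn
    obtain ⟨k, hk⟩ := hoddn
    cases w with
    | nil => simp at hlen; omega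
    | @cons _ y _ h p =>
      by_cases hnd : (Walk.cons h p).support.tail.Nodup
      · rw [Walk.support_cons, List.tail_cons] at hnd
        have hpath : p.IsPath := (Walk.isPath_def p).mpr hnd
        by_cases hedge : s(u, y) ∈ p.edges
        · have := path_edge_loop p hpath hedge
          rw [Walk.length_cons, this] at hlen
          omega
        · have hcyc : (Walk.cons h p).IsCycle :=
            (Walk.cons_isCycle_iff p h).mpr ⟨hpath, hedge⟩
          obtain ⟨m, hm⟩ := hodd u _ hcyc
          rw [hlen] at hm
          omega
      · obtain ⟨x, hdup⟩ := List.exists_duplicate_iff_not_nodup.mpr hnd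
        have hx : x ∈ (Walk.cons h p).support := List.mem_of_mem_tail hdup.mem
        set c : G.Walk x x := (Walk.cons h p).rotate x hx with hc
        have hclen : c.length = n := by
          have := (Walk.rotate_darts (Walk.cons h p) x hx).perm.length_eq
          rw [Walk.length_darts, Walk.length_darts] at this
          rw [hc, this, hlen]
        have hcount : 2 ≤ c.support.tail.count x := by
          rw [(Walk.support_rotate (Walk.cons h p) x hx).perm.count_eq]
          exact List.duplicate_iff_two_le_count.mp hdup
        cases hcc : c with
        | nil => rw [hcc] at hclen; simp at hclen; omega
        | @cons _ z _ h' p' =>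
          rw [hcc] at hcount hclen
          rw [Walk.support_cons, List.tail_cons] at hcount
          have hxp : x ∈ p'.support := by
            by_contra hmem
            rw [List.count_eq_zero_of_not_mem hmem] at hcount; omega
          set q := p'.takeUntil x hxp with hq
          set r := p'.dropUntil x hxp with hr
          have hspec : q.append r = p' := p'.take_spec hxp
          have hlensum : q.length + r.length = p'.length := by
            have := congrArg Walk.length hspec
            rwa [Walk.length_append] at this
          have hcount1 : q.support.count x = 1 := p'.count_support_takeUntil_eq_one hxp
          have hrpos : 1 ≤ r.length := by
            by_contra hr0
            push_neg at hr0
            have h0' : r.length = 0 := by omega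
            have hsup : r.support = [x] := by
              have h1 := Walk.support_eq_cons r
              have h2 := r.length_support
              rw [h0'] at h2
              rw [h1] at h2
              simp at h2
              exact Walk.nil_iff_support_eq.mp h2
            have hps : p'.support = q.support := by
              rw [← hspec, Walk.support_append, hsup]
              simp
            rw [hps, hcount1] at hcount; omega
          have hlength : 1 + (q.length + r.length) = n := by
            rw [hlensum]
            have := hclen
            rw [Walk.length_cons] at this
            omega
          rcases Nat.even_or_odd r.length with hre | hro
          · have : Odd (Walk.cons h' q).length := by
              rw [Walk.length_cons]
              obtain ⟨a, ha⟩ := hre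
              exact ⟨k - a, by omega⟩
            exact IH (Walk.cons h' q).length (by rw [Walk.length_cons]; omega) x _ rfl this
          · exact IH r.length (by omega) x r rfl hro

/-! ### Distance lemmas -/

lemma dist_le_succ_of_adj {G : SimpleGraph V} (hconn : G.Connected) (v₀ : V) {v w : V}
    (h : G.Adj v w) : G.dist v₀ w ≤ G.dist v₀ v + 1 := by
  obtain ⟨p, hp⟩ := hconn.exists_walk_length_eq_dist v₀ v
  have := G.dist_le (p.concat h)
  rwa [Walk.length_concat, hp] at this

lemma dist_succ_of_adj {G : SimpleGraph V} (hconn : G.Connected)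
    (hodd : ∀ (v : V) (w : G.Walk v v), w.IsCycle → Even w.length) (v₀ : V) {v w : V}
    (h : G.Adj v w) :
    G.dist v₀ w = G.dist v₀ v + 1 ∨ G.dist v₀ v = G.dist v₀ w + 1 := by
  have h1 := dist_le_succ_of_adj hconn v₀ h
  have h2 := dist_le_succ_of_adj hconn v₀ h.symm
  have hne : G.dist v₀ v ≠ G.dist v₀ w := by
    intro heq
    obtain ⟨p, hp⟩ := hconn.exists_walk_length_eq_dist v₀ v
    obtain ⟨q, hq⟩ := hconn.exists_walk_length_eq_dist v₀ w
    have hlen : (p.append (Walk.cons h q.reverse)).length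
        = 2 * G.dist v₀ v + 1 := by
      rw [Walk.length_append, Walk.length_cons, Walk.length_reverse, hp, hq, ← heq]
      ring
    exact no_odd_closed_walk hodd _ v₀ _ hlen ⟨G.dist v₀ v, by ring⟩
  omega

lemma exists_dist_eq' {G : SimpleGraph V} (hconn : G.Connected) (v₀ : V)
    (hunbdd : ∀ n : ℕ, ∃ x y : V, n ≤ G.dist x y) :
    ∀ n : ℕ, ∃ v : V, G.dist v₀ v = n := by
  have unb : ∀ n : ℕ, ∃ v : V, n ≤ G.dist v₀ v := by
    intro n
    obtain ⟨x, y, hxy⟩ := hunbdd (2 * n)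
    have ht : G.dist x y ≤ G.dist x v₀ + G.dist v₀ y := hconn.dist_triangle
    rw [SimpleGraph.dist_comm (u := x) (v := v₀)] at ht
    rcases (by omega : n ≤ G.dist v₀ x ∨ n ≤ G.dist v₀ y) with h | h
    exacts [⟨x, h⟩, ⟨y, h⟩]
  have aux : ∀ m : ℕ, ∀ v : V, G.dist v₀ v = m → ∀ k ≤ m, ∃ u, G.dist v₀ u = k := by
    intro m
    induction m with
    | zero => intro v _ k hk; exact ⟨v₀, by simp [Nat.le_zero.mp hk, SimpleGraph.dist_self]⟩
    | succ m IH =>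
      intro v hv k hk
      rcases Nat.lt_or_ge k (m + 1) with hlt | hge
      · obtain ⟨p, hp⟩ := hconn.exists_walk_length_eq_dist v₀ v
        have hnn : ¬ p.reverse.Nil := by
          rw [Walk.nil_iff_length_eq, Walk.length_reverse, hp, hv]
          omega
        obtain ⟨u, hadj, q, hq⟩ := Walk.not_nil_iff.mp hnn
        have hqlen : q.length = m := by
          have := congrArg Walk.length hq
          rw [Walk.length_reverse, hp, hv, Walk.length_cons] at this
          omega
        have hle : G.dist v₀ u ≤ m := by
          have := G.dist_le q.reverse
          rwa [Walk.length_reverse, hqlen] at this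
        have hge' : m ≤ G.dist v₀ u := by
          have := dist_le_succ_of_adj hconn v₀ hadj.symm
          omega
        exact IH u (le_antisymm hle hge') k (by omega)
      · exact ⟨v, by omega⟩
  intro n
  obtain ⟨v, hv⟩ := unb n
  exact aux _ v rfl n hv

/-! ### The natural tree -/

lemma natTree_adj {m n : ℕ} : natTree.Adj m n ↔ (n = m + 1 ∨ m = n + 1) := by
  simp only [natTree, fromRel_adj]
  constructor
  · rintro ⟨-, h⟩; tauto
  · intro h; exact ⟨by omega, by tauto⟩

lemma natTree_connected : natTree.Connected := by
  rw [connected_iff]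
  refine ⟨fun a b => ?_, ⟨0⟩⟩
  have key : ∀ n : ℕ, natTree.Reachable 0 n := by
    intro n
    induction n with
    | zero => exact Reachable.refl 0
    | succ n IH => exact IH.trans (Adj.reachable (natTree_adj.mpr (Or.inl rfl)))
  exact (key a).symm.trans (key b)

/-! ### Proper setoids and the decomposition of colorings -/

/-- Proper setoids of a graph. -/
def PS (G : SimpleGraph V) : Type :=
  {s : Setoid V // ∀ v w, G.Adj v w → ¬ s.r v w}

lemma sigmaEq {G : SimpleGraph V} {X : Type*} {s s' : PS G} (h : s = s')
    (g : Quotient s.1 ↪ X) (g' : Quotient s'.1 ↪ X)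
    (hg : ∀ v, g (Quotient.mk s.1 v) = g' (Quotient.mk s'.1 v)) :
    (⟨s, g⟩ : Σ t : PS G, Quotient t.1 ↪ X) = ⟨s', g'⟩ := by
  subst h
  congr 1
  refine DFunLike.ext _ _ fun q => ?_
  induction q using Quotient.ind
  exact hg _

/-- Decomposition of colorings into kernel + injection. -/
def decomp (G : SimpleGraph V) (X : Type*) :
    Col G X ≃ Σ s : PS G, (Quotient s.1 ↪ X) where
  toFun c := ⟨⟨Setoid.ker c.1, fun v w h hr => c.2 v w h hr⟩,
    ⟨Quotient.lift c.1 fun _ _ h => h,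
     fun a b => Quotient.inductionOn₂ a b fun _ _ h => Quotient.sound h⟩⟩
  invFun sg := ⟨fun v => sg.2 (Quotient.mk sg.1.1 v),
    fun v w h hc => sg.1.2 v w h (Quotient.exact (sg.2.injective hc))⟩
  left_inv c := Subtype.ext (funext fun v => rfl)
  right_inv sg := by
    obtain ⟨⟨s, hs⟩, g⟩ := sg
    refine sigmaEq (Subtype.ext (Setoid.ext fun a b => ?_)) _ _ (fun v => rfl)
    exact ⟨fun h => Quotient.exact (g.injective h),
      fun h => congrArg g (Quotient.sound h)⟩

def fmap {G : SimpleGraph V} {X Y : Type*} (f : X ↪ Y)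
    (sg : Σ s : PS G, Quotient s.1 ↪ X) : Σ s : PS G, Quotient s.1 ↪ Y :=
  ⟨sg.1, sg.2.trans f⟩

lemma decomp_natural (G : SimpleGraph V) {X Y : Type*} (f : X ↪ Y) (c : Col G X) :
    decomp G Y (Col.map f c) = fmap f (decomp G X c) := by
  refine sigmaEq (Subtype.ext (Setoid.ext fun a b => ?_)) _ _ (fun v => rfl)
  exact ⟨fun h => f.injective h, fun h => congrArg f h⟩

/-! ### Two-class uniqueness -/

lemma two_class_unique {G : SimpleGraph V} (hconn : G.Connected)
    (s t : PS G) (hs : Cardinal.mk (Quotient s.1) = 2)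
    (ht : Cardinal.mk (Quotient t.1) = 2) : s = t := by
  have key : ∀ (u : PS G), Cardinal.mk (Quotient u.1) = 2 →
      ∀ a b : V, ∀ p : G.Walk a b, (u.1.r a b ↔ Even p.length) := by
    intro u hu a b p
    have htwo : ∀ x y z : V, ¬ u.1.r x y → (u.1.r x z ∨ u.1.r y z) := by
      intro x y z hxy
      obtain ⟨q1, q2, hne, huniv⟩ := Cardinal.mk_eq_two_iff.mp hu
      have hmem : ∀ q : Quotient u.1, q = q1 ∨ q = q2 := by
        intro q
        have : q ∈ ({q1, q2} : Set (Quotient u.1)) := huniv ▸ Set.mem_univ q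
        simpa using this
      have hx := hmem (Quotient.mk u.1 x)
      have hy := hmem (Quotient.mk u.1 y)
      have hz := hmem (Quotient.mk u.1 z)
      have hxy' : Quotient.mk u.1 x ≠ Quotient.mk u.1 y := by
        intro h; exact hxy (Quotient.exact h)
      have : Quotient.mk u.1 z = Quotient.mk u.1 x ∨
          Quotient.mk u.1 z = Quotient.mk u.1 y := by
        rcases hx with hx | hx <;> rcases hy with hy | hy <;>
          rcases hz with hz | hz <;> simp_all
      rcases this with h | h
      · exact Or.inl (u.1.iseqv.symm (Quotient.exact h))
      · exact Or.inr (u.1.iseqv.symm (Quotient.exact h))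
    induction p with
    | nil => simpa using u.1.iseqv.refl _
    | @cons a x b h p IH =>
      have hax : ¬ u.1.r a x := u.2 a x h
      have hstep : u.1.r a b ↔ ¬ u.1.r x b := by
        constructor
        · intro hab hxb
          exact hax (u.1.iseqv.trans hab (u.1.iseqv.symm hxb))
        · intro hxb
          rcases htwo a x b hax with h' | h'
          · exact h'
          · exact absurd h' hxb
      rw [hstep, Walk.length_cons, Nat.even_add_one]
      exact not_congr IH
  refine Subtype.ext (Setoid.ext fun a b => ?_)
  obtain ⟨p⟩ := hconn a b
  rw [key s hs a b p, key t ht a b p]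

/-! ### The encoding colorings -/

noncomputable section

open Classical in
def encCol {K : Type} (k₀ k₁ k₂ : K) (e : ℕ → K) (A : Set ℕ) : ℕ → K := fun n =>
  if n % 2 = 1 then k₀ else if n % 4 = 0 then e (n / 4)
  else if n / 4 ∈ A then k₁ else k₂

variable {K : Type} {k₀ k₁ k₂ : K} {e : ℕ → K}

lemma encCol_proper (h10 : k₁ ≠ k₀) (h20 : k₂ ≠ k₀) (he0 : ∀ n, e n ≠ k₀)
    (A : Set ℕ) {m n : ℕ} (h : natTree.Adj m n) :
    encCol k₀ k₁ k₂ e A m ≠ encCol k₀ k₁ k₂ e A n := by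
  have key : ∀ p : ℕ, encCol k₀ k₁ k₂ e A p ≠ encCol k₀ k₁ k₂ e A (p + 1) := by
    intro p
    unfold encCol
    rcases Nat.even_or_odd p with ⟨a, ha⟩ | ⟨a, ha⟩
    · have h1 : p % 2 ≠ 1 := by omega
      have h2 : (p + 1) % 2 = 1 := by omega
      simp only [if_neg h1, if_pos h2]
      split_ifs <;> simp [he0, h10, h20]
    · have h1 : p % 2 = 1 := by omega
      have h2 : (p + 1) % 2 ≠ 1 := by omega
      simp only [if_pos h1, if_neg h2]
      split_ifs <;> simp [Ne.symm (he0 _), Ne.symm h10, Ne.symm h20]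
  rcases natTree_adj.mp h with h | h
  · rw [h]; exact key m
  · rw [h]; exact Ne.symm (key n)

lemma encCol_surj (hesurj : ∀ k : K, k ≠ k₀ → ∃ n, e n = k) (A : Set ℕ) :
    Function.Surjective (encCol k₀ k₁ k₂ e A) := by
  intro k
  by_cases hk : k = k₀
  · exact ⟨1, by simp [encCol, hk]⟩
  · obtain ⟨n, hn⟩ := hesurj k hk
    refine ⟨4 * n, ?_⟩
    have h1 : (4 * n) % 2 ≠ 1 := by omega
    have h2 : (4 * n) % 4 = 0 := by omega
    have h3 : 4 * n / 4 = n := by omega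
    simp [encCol, h1, h2, h3, hn]

lemma encCol_mem_iff (h21 : k₂ ≠ k₁) (A : Set ℕ) (m m₁ : ℕ) (hm₁ : e m₁ = k₁) :
    (m ∈ A ↔ encCol k₀ k₁ k₂ e A (4 * m + 2) = encCol k₀ k₁ k₂ e A (4 * m₁)) := by
  have h1 : (4 * m + 2) % 2 ≠ 1 := by omega
  have h2 : (4 * m + 2) % 4 ≠ 0 := by omega
  have h3 : (4 * m + 2) / 4 = m := by omega
  have h4 : (4 * m₁) % 2 ≠ 1 := by omega
  have h5 : (4 * m₁) % 4 = 0 := by omega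
  have h6 : 4 * m₁ / 4 = m₁ := by omega
  simp only [encCol, if_neg h1, if_neg h2, h3, if_neg h4, if_pos h5, h6, hm₁]
  by_cases hmA : m ∈ A <;> simp [hmA, h21, h3]

end

/-! ### Cardinality bounds -/

lemma two_le_q {G : SimpleGraph V} {x z : V} (hxz : G.Adj x z) (s : PS G) :
    2 ≤ Cardinal.mk (Quotient s.1) := by
  refine Cardinal.two_le_iff.mpr ⟨Quotient.mk s.1 x, Quotient.mk s.1 z, fun h => ?_⟩
  exact s.2 x z hxz (Quotient.exact h)

lemma mk_PS_le [Countable V] (G : SimpleGraph V) :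
    Cardinal.mk (PS G) ≤ 2 ^ Cardinal.aleph0 := by
  have h1 : Cardinal.mk (PS G) ≤ Cardinal.mk (Setoid V) := Cardinal.mk_subtype_le _
  have h2 : Cardinal.mk (Setoid V) ≤ Cardinal.mk (V → V → Prop) :=
    Cardinal.mk_le_of_injective (f := fun s => s.r)
      (fun s t h => Setoid.ext fun a b => iff_of_eq (congrFun (congrFun h a) b))
  have h3 : Cardinal.mk (V → V → Prop) = 2 ^ Cardinal.mk (V × V) := by
    rw [← Cardinal.mk_set]
    exact Cardinal.mk_congr (Equiv.curry V V Prop).symm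
  have h4 : (2 : Cardinal) ^ Cardinal.mk (V × V) ≤ 2 ^ Cardinal.aleph0 :=
    Cardinal.power_le_power_left (by norm_num) Cardinal.mk_le_aleph0
  exact (h1.trans h2).trans ((le_of_eq h3).trans h4)

lemma fiberT_lower (κ : Cardinal) (h3 : (3 : Cardinal) ≤ κ) (hκ : κ ≤ Cardinal.aleph0) :
    2 ^ Cardinal.aleph0 ≤
      Cardinal.mk {t : PS natTree // Cardinal.mk (Quotient t.1) = κ} := by
  classical
  obtain ⟨S, hS⟩ := Cardinal.le_mk_iff_exists_set.mp
    (show κ ≤ Cardinal.mk ℕ by rw [Cardinal.mk_nat]; exact hκ)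
  set K := ↥S
  have h3' : (3 : Cardinal) ≤ Cardinal.mk K := by rw [hS]; exact h3
  have hne : Nonempty K := by
    rw [← Cardinal.mk_ne_zero_iff]
    intro h0
    rw [h0] at h3'
    exact absurd h3' (by norm_num)
  obtain ⟨k₀⟩ := hne
  obtain ⟨k₁, h10, -⟩ := Cardinal.three_le h3' k₀ k₀
  obtain ⟨k₂, h20, h21⟩ := Cardinal.three_le h3' k₀ k₁
  haveI : Nonempty {k : K // k ≠ k₀} := ⟨⟨k₁, h10⟩⟩
  obtain ⟨e', he'⟩ := exists_surjective_nat {k : K // k ≠ k₀}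
  set e : ℕ → K := fun n => (e' n).1 with he_def
  have he0 : ∀ n, e n ≠ k₀ := fun n => (e' n).2
  have hesurj : ∀ k : K, k ≠ k₀ → ∃ n, e n = k := by
    intro k hk
    obtain ⟨n, hn⟩ := he' ⟨k, hk⟩
    exact ⟨n, by rw [he_def]; simp [hn]⟩
  obtain ⟨m₁, hm₁⟩ := hesurj k₁ h10
  set F : Set ℕ → {t : PS natTree // Cardinal.mk (Quotient t.1) = κ} := fun A =>
    ⟨⟨Setoid.ker (encCol k₀ k₁ k₂ e A),
      fun v w h hr => encCol_proper h10 h20 he0 A h hr⟩, by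
      rw [Cardinal.mk_congr (Setoid.quotientKerEquivOfSurjective _
        (encCol_surj hesurj A))]
      exact hS⟩ with hF
  have hFinj : Function.Injective F := by
    intro A A' h
    have hker : Setoid.ker (encCol k₀ k₁ k₂ e A) = Setoid.ker (encCol k₀ k₁ k₂ e A') := by
      have := congrArg Subtype.val h
      exact congrArg Subtype.val this
    ext m
    rw [encCol_mem_iff h21 A m m₁ hm₁, encCol_mem_iff h21 A' m m₁ hm₁]
    exact iff_of_eq (congrFun (congrFun (congrArg (fun s : Setoid ℕ => s.r) hker) (4 * m + 2)) (4 * m₁))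
  calc 2 ^ Cardinal.aleph0 = Cardinal.mk (Set ℕ) := by rw [Cardinal.mk_set, Cardinal.mk_nat]
    _ ≤ _ := Cardinal.mk_le_of_injective hFinj

/-- A proper 2-class setoid on the natural tree. -/
noncomputable def parityPS : {t : PS natTree // Cardinal.mk (Quotient t.1) = 2} := by
  refine ⟨⟨Setoid.ker (fun n : ℕ => decide (n % 2 = 0)), ?_⟩, ?_⟩
  · intro v w h hr
    have key : ∀ m : ℕ, decide (m % 2 = 0) ≠ decide ((m + 1) % 2 = 0) := by
      intro m hm
      rw [decide_eq_decide] at hm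
      omega
    rcases natTree_adj.mp h with h' | h'
    · rw [h'] at hr
      exact key v hr
    · rw [h'] at hr
      exact key w hr.symm
  · have hsurj : Function.Surjective (fun n : ℕ => decide (n % 2 = 0)) := by
      intro b
      cases b
      · exact ⟨1, by norm_num⟩
      · exact ⟨0, by norm_num⟩
    rw [Cardinal.mk_congr (Setoid.quotientKerEquivOfSurjective _ hsurj)]
    exact Cardinal.mk_bool

end ColAux

open ColAux SimpleGraph in
theorem unbounded_bipartite_chromatically_equivalent_to_natTree
    {V : Type} [Countable V] (G : SimpleGraph V) (hconn : G.Connected)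
    (hodd : ∀ (v : V) (w : G.Walk v v), w.IsCycle → Even w.length)
    (hunbdd : ∀ n : ℕ, ∃ x y : V, n ≤ G.dist x y) :
    ∃ e : ∀ X : Type, Col G X ≃ Col natTree X,
      ∀ (X Y : Type) (f : X ↪ Y) (c : Col G X),
        e Y (Col.map f c) = Col.map f (e X c) := by
  classical
  obtain ⟨v₀⟩ := hconn.nonempty
  set d : V → ℕ := fun v => G.dist v₀ v with hd_def
  have hd : ∀ v w, G.Adj v w → natTree.Adj (d v) (d w) := fun v w h =>
    natTree_adj.mpr (dist_succ_of_adj hconn hodd v₀ h)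
  have hdsurj : Function.Surjective d := fun n => exists_dist_eq' hconn v₀ hunbdd n
  -- G has an edge
  obtain ⟨x₀, z₀, hxz⟩ : ∃ x z, G.Adj x z := by
    obtain ⟨x, y, hxy⟩ := hunbdd 1
    obtain ⟨p⟩ := hconn x y
    cases p with
    | nil =>
      rw [SimpleGraph.dist_self] at hxy
      omega
    | cons h q => exact ⟨_, _, h⟩
  -- pulling back proper setoids along d
  let pull : PS natTree → PS G := fun t =>
    ⟨Setoid.comap d t.1, fun v w h hr => t.2 _ _ (hd v w h) hr⟩
  have pullEquiv : ∀ t : PS natTree, Quotient (pull t).1 ≃ Quotient t.1 := by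
    intro t
    refine Equiv.ofBijective
      (Quotient.lift (fun v => Quotient.mk t.1 (d v))
        (fun a b h => Quotient.sound (show t.1.r (d a) (d b) from h)))
      ⟨?_, ?_⟩
    · intro q1 q2
      induction q1 using Quotient.ind with | _ v => ?_
      induction q2 using Quotient.ind with | _ w => ?_
      intro h
      have h' : Quotient.mk t.1 (d v) = Quotient.mk t.1 (d w) := h
      have h'' : t.1.r (d v) (d w) := Quotient.exact h'
      exact Quotient.sound h''
    intro q
    induction q using Quotient.ind with
    | _ n =>
      obtain ⟨v, hv⟩ := hdsurj n
      refine ⟨Quotient.mk (pull t).1 v, ?_⟩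
      show Quotient.mk t.1 (d v) = Quotient.mk t.1 n
      rw [hv]
  have pull_card : ∀ t, Cardinal.mk (Quotient (pull t).1) = Cardinal.mk (Quotient t.1) :=
    fun t => Cardinal.mk_congr (pullEquiv t)
  have pull_inj : Function.Injective pull := by
    intro a b h
    have h' : Setoid.comap d a.1 = Setoid.comap d b.1 := congrArg Subtype.val h
    refine Subtype.ext (Setoid.ext fun m n => ?_)
    obtain ⟨v, hv⟩ := hdsurj m
    obtain ⟨w, hw⟩ := hdsurj n
    subst hv hw
    exact iff_of_eq (congrFun (congrFun (congrArg (fun s : Setoid V => s.r) h') v) w)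
  -- the fiberwise equivalences
  have fibEquiv : ∀ κ : Cardinal,
      Nonempty ({s : PS G // Cardinal.mk (Quotient s.1) = κ} ≃
        {t : PS natTree // Cardinal.mk (Quotient t.1) = κ}) := by
    intro κ
    by_cases hGe : IsEmpty {s : PS G // Cardinal.mk (Quotient s.1) = κ}
    · haveI : IsEmpty {t : PS natTree // Cardinal.mk (Quotient t.1) = κ} :=
        ⟨fun t => hGe.false ⟨pull t.1, (pull_card t.1).trans t.2⟩⟩
      exact ⟨Equiv.equivOfIsEmpty _ _⟩
    · rw [not_isEmpty_iff] at hGe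
      obtain ⟨⟨s₀, hs₀⟩⟩ := hGe
      have h2 : (2 : Cardinal) ≤ κ := hs₀ ▸ two_le_q hxz s₀
      have hκω : κ ≤ Cardinal.aleph0 := hs₀ ▸ Cardinal.mk_le_aleph0
      by_cases h2' : κ = 2
      · subst h2'
        haveI sub1 : Subsingleton {s : PS G // Cardinal.mk (Quotient s.1) = 2} :=
          ⟨fun a b => Subtype.ext (two_class_unique hconn _ _ a.2 b.2)⟩
        haveI sub2 : Subsingleton {t : PS natTree // Cardinal.mk (Quotient t.1) = 2} :=
          ⟨fun a b => Subtype.ext (two_class_unique natTree_connected _ _ a.2 b.2)⟩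
        exact ⟨⟨fun _ => parityPS, fun _ => ⟨s₀, hs₀⟩,
          fun _ => Subsingleton.elim _ _, fun _ => Subsingleton.elim _ _⟩⟩
      · have h3 : (3 : Cardinal) ≤ κ := by
          have hlt : (2 : Cardinal) < κ := lt_of_le_of_ne h2 (Ne.symm h2')
          have := Order.succ_le_of_lt hlt
          have h2c : ((2 : ℕ) : Cardinal) = (2 : Cardinal) := by norm_num
          rw [← h2c, Cardinal.succ_natCast] at this
          norm_num at this
          try exact this
        have hle1 : Cardinal.mk {t : PS natTree // Cardinal.mk (Quotient t.1) = κ} ≤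
            Cardinal.mk {s : PS G // Cardinal.mk (Quotient s.1) = κ} := by
          refine Cardinal.mk_le_of_injective
            (f := fun t => ⟨pull t.1, (pull_card t.1).trans t.2⟩) ?_
          intro a b h
          exact Subtype.ext (pull_inj (congrArg Subtype.val h))
        have hle2 : Cardinal.mk {s : PS G // Cardinal.mk (Quotient s.1) = κ} ≤
            2 ^ Cardinal.aleph0 := le_trans (Cardinal.mk_subtype_le _) (mk_PS_le G)
        have hle3 := fiberT_lower κ h3 hκω
        exact Cardinal.eq.mp (le_antisymm (hle2.trans hle3) hle1)
  let FE : ∀ κ : Cardinal, {s : PS G // Cardinal.mk (Quotient s.1) = κ} ≃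
      {t : PS natTree // Cardinal.mk (Quotient t.1) = κ} :=
    fun κ => Classical.choice (fibEquiv κ)
  let Φ : PS G ≃ PS natTree :=
    ((Equiv.sigmaFiberEquiv (fun s : PS G => Cardinal.mk (Quotient s.1))).symm.trans
      (Equiv.sigmaCongrRight FE)).trans
      (Equiv.sigmaFiberEquiv (fun t : PS natTree => Cardinal.mk (Quotient t.1)))
  have hΦ : ∀ s : PS G, Cardinal.mk (Quotient (Φ s).1) = Cardinal.mk (Quotient s.1) :=
    fun s => (FE (Cardinal.mk (Quotient s.1)) ⟨s, rfl⟩).2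
  let qe : ∀ s : PS G, Quotient s.1 ≃ Quotient (Φ s).1 :=
    fun s => Classical.choice (Cardinal.eq.mp (hΦ s).symm)
  let mid : ∀ X : Type, (Σ s : PS G, Quotient s.1 ↪ X) ≃ (Σ t : PS natTree, Quotient t.1 ↪ X) :=
    fun X => Equiv.sigmaCongr Φ (fun s => Equiv.embeddingCongr (qe s) (Equiv.refl X))
  refine ⟨fun X => ((decomp G X).trans (mid X)).trans (decomp natTree X).symm, ?_⟩
  intro X Y f c
  apply (decomp natTree Y).injective
  rw [decomp_natural natTree f]
  simp only [Equiv.trans_apply, Equiv.apply_symm_apply]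
  rw [decomp_natural G f]
  generalize decomp G X c = τ
  obtain ⟨s, g⟩ := τ
  exact sigmaEq rfl _ _ (fun v => rfl)
end

section
/- Every connected countable tree of infinite diameter is chromatically equivalent to the natural tree T_ℕ, i.e., for every set X there are bijections, natural in X with respect to injections, between proper X-colorings of the tree and of T_ℕ. -/
open SimpleGraph

namespace ChromAux

/-! ### Combinatorial core: swap-transport of colorings along an enumeration -/

variable {V X Y : Type}

/-- Forward transport of a coloring along an enumeration with parent function. -/
def fwd [DecidableEq X] (w : ℕ → V) (par : ℕ → ℕ) (c : V → X) : ℕ → X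
  | 0 => c (w 0)
  | (j+1) => Equiv.swap (c (w (par (j+1)))) (fwd w par c j) (c (w (j+1)))

/-- Backward transport. -/
def bwd [DecidableEq X] (par : ℕ → ℕ) (d : ℕ → X) : ℕ → X
  | 0 => d 0
  | (j+1) => Equiv.swap (bwd par d (min (par (j+1)) j)) (d j) (d (j+1))
decreasing_by exact Nat.lt_succ_of_le (min_le_right _ _)

variable [DecidableEq X] [DecidableEq Y] {w : ℕ → V} {par : ℕ → ℕ}

lemma bwd_succ (hpar : ∀ j, par (j+1) ≤ j) (d : ℕ → X) (j : ℕ) :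
    bwd par d (j+1) = Equiv.swap (bwd par d (par (j+1))) (d j) (d (j+1)) := by
  rw [bwd, min_eq_left (hpar j)]

lemma fwd_ne (c : V → X) (j : ℕ) (hc : c (w (j+1)) ≠ c (w (par (j+1)))) :
    fwd w par c (j+1) ≠ fwd w par c j := by
  rw [fwd]
  intro h
  exact hc ((Equiv.swap _ _).injective (h.trans (Equiv.swap_apply_left _ _).symm))

lemma bwd_ne (hpar : ∀ j, par (j+1) ≤ j) (d : ℕ → X) (j : ℕ) (hd : d (j+1) ≠ d j) :
    bwd par d (j+1) ≠ bwd par d (par (j+1)) := by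
  rw [bwd_succ hpar]
  intro h
  exact hd ((Equiv.swap _ _).injective (h.trans (Equiv.swap_apply_right _ _).symm))

lemma bwd_fwd (hpar : ∀ j, par (j+1) ≤ j) (c : V → X) :
    ∀ j, bwd par (fwd w par c) j = c (w j) := by
  intro j
  induction j using Nat.strong_induction_on with
  | _ j ih =>
    match j with
    | 0 => rw [bwd, fwd]
    | (j+1) =>
      rw [bwd_succ hpar, ih (par (j+1)) (Nat.lt_succ_of_le (hpar j)), fwd,
        Equiv.swap_apply_self]

lemma fwd_bwd (hpar : ∀ j, par (j+1) ≤ j) (we : ℕ ≃ V) (d : ℕ → X) :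
    ∀ j, fwd we par (fun v => bwd par d (we.symm v)) j = d j := by
  intro j
  induction j using Nat.strong_induction_on with
  | _ j ih =>
    match j with
    | 0 => rw [fwd]; simp [bwd]
    | (j+1) =>
      rw [fwd, ih j (Nat.lt_succ_self j)]
      simp only [Equiv.symm_apply_apply]
      rw [bwd_succ hpar, Equiv.swap_apply_self]

lemma fwd_map (f : X → Y) (hf : Function.Injective f) (c : V → X) :
    ∀ j, fwd w par (f ∘ c) j = f (fwd w par c j) := by
  intro j
  induction j with
  | zero => rw [fwd, fwd]; rfl
  | succ j ih =>
    rw [fwd, fwd, ih, Function.comp_apply, Function.comp_apply,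
      hf.swap_apply]

lemma natTree_adj {m n : ℕ} : (natTree).Adj m n ↔ m ≠ n ∧ (n = m + 1 ∨ m = n + 1) := by
  simp [natTree, SimpleGraph.fromRel_adj]

/-- Properness of the forward transport. -/
lemma fwd_proper {G : SimpleGraph V} (par : ℕ → ℕ)
    (hadj : ∀ j, G.Adj (w (j+1)) (w (par (j+1)))) (c : Col G X) :
    ∀ m n, natTree.Adj m n → fwd w par c.1 m ≠ fwd w par c.1 n := by
  intro m n hmn
  rw [natTree_adj] at hmn
  obtain ⟨hne, h1 | h1⟩ := hmn
  · subst h1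
    exact (fwd_ne c.1 m (c.2 _ _ (hadj m))).symm
  · subst h1
    exact fwd_ne c.1 n (c.2 _ _ (hadj n))

/-- Properness of the backward transport. -/
lemma bwd_proper {G : SimpleGraph V} (we : ℕ ≃ V) (par : ℕ → ℕ)
    (hpar : ∀ j, par (j+1) ≤ j)
    (hcover : ∀ a b, G.Adj a b → ∃ j, (a = we (j+1) ∧ b = we (par (j+1))) ∨
      (b = we (j+1) ∧ a = we (par (j+1)))) (d : Col natTree X) :
    ∀ a b, G.Adj a b → bwd par d.1 (we.symm a) ≠ bwd par d.1 (we.symm b) := by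
  intro a b hab
  obtain ⟨j, ⟨ha, hb⟩ | ⟨hb, ha⟩⟩ := hcover a b hab
  · subst ha; subst hb
    simp only [Equiv.symm_apply_apply]
    exact bwd_ne hpar d.1 j (d.2 (j+1) j (natTree_adj.2 ⟨by omega, Or.inr rfl⟩))
  · subst ha; subst hb
    simp only [Equiv.symm_apply_apply]
    exact (bwd_ne hpar d.1 j (d.2 (j+1) j (natTree_adj.2 ⟨by omega, Or.inr rfl⟩))).symm

/-- The main combinatorial lemma. -/
lemma core {G : SimpleGraph V} (we : ℕ ≃ V) (par : ℕ → ℕ)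
    (hpar : ∀ j, par (j+1) ≤ j)
    (hadj : ∀ j, G.Adj (we (j+1)) (we (par (j+1))))
    (hcover : ∀ a b, G.Adj a b → ∃ j, (a = we (j+1) ∧ b = we (par (j+1))) ∨
      (b = we (j+1) ∧ a = we (par (j+1)))) :
    ∃ e : ∀ X : Type, Col G X ≃ Col natTree X,
      ∀ (X Y : Type) (f : X ↪ Y) (c : Col G X),
        e Y (Col.map f c) = Col.map f (e X c) := by
  refine ⟨fun X =>
    letI := Classical.decEq X
    { toFun := fun c => ⟨fwd we par c.1, fwd_proper par hadj c⟩
      invFun := fun d => ⟨fun v => bwd par d.1 (we.symm v), bwd_proper we par hpar hcover d⟩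
      left_inv := fun c => Subtype.ext (funext fun v => by
        simpa using bwd_fwd (w := we) hpar c.1 (we.symm v))
      right_inv := fun d => Subtype.ext (funext fun j => fwd_bwd hpar we d.1 j) }, ?_⟩
  intro X Y f c
  apply Subtype.ext
  funext j
  letI := Classical.decEq X
  letI := Classical.decEq Y
  exact fwd_map f f.injective c.1 j


open SimpleGraph Walk

variable {V : Type} {G : SimpleGraph V}

/-- The chosen path from `v` to the root `r` in a tree. -/
noncomputable def pth (hT : G.IsTree) (r v : V) : G.Walk v r :=
  (hT.existsUnique_path v r).exists.choose

lemma pth_isPath (hT : G.IsTree) (r v : V) : (pth hT r v).IsPath :=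
  (hT.existsUnique_path v r).exists.choose_spec

lemma pth_unique (hT : G.IsTree) (r v : V) (p : G.Walk v r) (hp : p.IsPath) :
    p = pth hT r v :=
  (hT.existsUnique_path v r).unique hp (pth_isPath hT r v)

/-- Depth of a vertex. -/
noncomputable def dep (hT : G.IsTree) (r v : V) : ℕ := (pth hT r v).length

/-- Parent of a vertex. -/
noncomputable def parent (hT : G.IsTree) (r v : V) : V := (pth hT r v).getVert 1

lemma pth_self (hT : G.IsTree) (r : V) : pth hT r r = Walk.nil :=
  (pth_unique hT r r Walk.nil IsPath.nil).symm

lemma dep_self (hT : G.IsTree) (r : V) : dep hT r r = 0 := by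
  rw [dep, pth_self]; rfl

lemma eq_root_of_dep_eq_zero (hT : G.IsTree) (r v : V) (h : dep hT r v = 0) : v = r :=
  Walk.eq_of_length_eq_zero h

lemma exists_step (hT : G.IsTree) (r : V) {v : V} (hv : v ≠ r) :
    ∃ h : G.Adj v (parent hT r v), pth hT r v = Walk.cons h (pth hT r (parent hT r v)) := by
  obtain ⟨u, ha, q, hq⟩ := Walk.exists_eq_cons_of_ne hv (pth hT r v)
  have hu : parent hT r v = u := by rw [parent, hq]; exact (Walk.getVert_cons_succ (n := 0) _ _).trans (Walk.getVert_zero _)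
  subst hu
  have hqp : q.IsPath := by
    have h1 := pth_isPath hT r v
    rw [hq] at h1
    exact h1.of_cons
  exact ⟨ha, by rw [hq, pth_unique hT r _ q hqp]⟩

lemma adj_parent (hT : G.IsTree) (r : V) {v : V} (hv : v ≠ r) :
    G.Adj v (parent hT r v) := by
  obtain ⟨h, -⟩ := exists_step hT r hv
  exact h

lemma dep_parent (hT : G.IsTree) (r : V) {v : V} (hv : v ≠ r) :
    dep hT r (parent hT r v) + 1 = dep hT r v := by
  obtain ⟨h, hq⟩ := exists_step hT r hv
  rw [dep, dep, hq, Walk.length_cons]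

lemma support_eq (hT : G.IsTree) (r : V) {v : V} (hv : v ≠ r) :
    (pth hT r v).support = v :: (pth hT r (parent hT r v)).support := by
  obtain ⟨h, hq⟩ := exists_step hT r hv
  rw [hq, Walk.support_cons]

lemma dep_lt_of_mem (hT : G.IsTree) (r : V) :
    ∀ v u, u ∈ (pth hT r v).support → u = v ∨ dep hT r u < dep hT r v := by
  suffices H : ∀ n v u, dep hT r v = n → u ∈ (pth hT r v).support →
      u = v ∨ dep hT r u < dep hT r v by
    intro v u hu
    exact H _ v u rfl hu
  intro n
  induction n using Nat.strong_induction_on with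
  | _ n ih =>
    intro v u hn hu
    by_cases hv : v = r
    · subst hv
      rw [pth_self] at hu
      simp only [Walk.support_nil, List.mem_singleton] at hu
      exact Or.inl hu
    · rw [support_eq hT r hv, List.mem_cons] at hu
      rcases hu with rfl | hu
      · exact Or.inl rfl
      · have hlt : dep hT r (parent hT r v) < n := by
          have := dep_parent hT r hv
          omega
        rcases ih _ hlt (parent hT r v) u rfl hu with rfl | h
        · right; omega
        · right
          have := dep_parent hT r hv
          omega

lemma adj_step (hT : G.IsTree) (r : V) {a b : V} (hab : G.Adj a b)
    (hd : dep hT r a ≤ dep hT r b) : b ≠ r ∧ parent hT r b = a := by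
  have hbr : b ≠ r := by
    rintro rfl
    have h0 : dep hT b b = 0 := dep_self hT b
    have ha0 : a = b := eq_root_of_dep_eq_zero hT b a (by omega)
    exact hab.ne ha0
  have hbs : b ∉ (pth hT r a).support := by
    intro hmem
    rcases dep_lt_of_mem hT r a b hmem with rfl | h
    · exact hab.ne rfl
    · omega
  have hp : (Walk.cons hab.symm (pth hT r a)).IsPath :=
    (pth_isPath hT r a).cons hbs
  have huniq := pth_unique hT r b _ hp
  refine ⟨hbr, ?_⟩
  rw [parent, ← huniq]; exact (Walk.getVert_cons_succ (n := 0) _ _).trans (Walk.getVert_zero _)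

lemma adj_cover (hT : G.IsTree) (r : V) {a b : V} (hab : G.Adj a b) :
    (b ≠ r ∧ parent hT r b = a) ∨ (a ≠ r ∧ parent hT r a = b) := by
  rcases le_total (dep hT r a) (dep hT r b) with h | h
  · exact Or.inl (adj_step hT r hab h)
  · exact Or.inr (adj_step hT r hab.symm h)

/-! ### The key function and height -/

lemma le_foldr_max {l : List ℕ} {x : ℕ} (hx : x ∈ l) : x ≤ l.foldr max 0 := by
  induction l with
  | nil => cases hx
  | cons a l ih =>
    rw [List.foldr_cons]
    rcases List.mem_cons.1 hx with rfl | h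
    · exact le_max_left _ _
    · exact le_trans (ih h) (le_max_right _ _)

/-- Max of `idx` over the path to the root. -/
noncomputable def keyv (idx : V → ℕ) (hT : G.IsTree) (r v : V) : ℕ :=
  ((pth hT r v).support.map idx).foldr max 0

lemma idx_le_keyv (idx : V → ℕ) (hT : G.IsTree) (r v : V) : idx v ≤ keyv idx hT r v :=
  le_foldr_max (List.mem_map_of_mem (f := idx) (Walk.start_mem_support _))

lemma keyv_parent_le (idx : V → ℕ) (hT : G.IsTree) (r : V) {v : V} (hv : v ≠ r) :
    keyv idx hT r (parent hT r v) ≤ keyv idx hT r v := by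
  rw [keyv, keyv, support_eq hT r hv, List.map_cons, List.foldr_cons]
  exact le_max_right _ _

lemma dep_le_keyv (idx : V → ℕ) (hinj : Function.Injective idx) (hT : G.IsTree)
    (r v : V) : dep hT r v ≤ keyv idx hT r v := by
  set l := (pth hT r v).support.map idx with hl
  have hnd : l.Nodup := ((pth_isPath hT r v).support_nodup).map hinj
  have hlen : l.length = dep hT r v + 1 := by
    rw [hl, List.length_map, Walk.length_support, dep]
  have hsub : l.toFinset ⊆ Finset.range (keyv idx hT r v + 1) := by
    intro x hx
    rw [Finset.mem_range]
    have : x ≤ keyv idx hT r v := le_foldr_max (List.mem_toFinset.1 hx)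
    omega
  have hcard := Finset.card_le_card hsub
  rw [List.toFinset_card_of_nodup hnd, Finset.card_range, hlen] at hcard
  omega

/-- Height: an injection into `ℕ` strictly increasing from parent to child. -/
noncomputable def hgt (idx : V → ℕ) (hT : G.IsTree) (r v : V) : ℕ :=
  (keyv idx hT r v)^3 + (dep hT r v) * (keyv idx hT r v + 1) + idx v

lemma hgt_lt_cube (idx : V → ℕ) (hinj : Function.Injective idx) (hT : G.IsTree)
    (r v : V) : hgt idx hT r v < (keyv idx hT r v + 1)^3 := by
  have h1 := dep_le_keyv idx hinj hT r v
  have h2 := idx_le_keyv idx hT r v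
  rw [hgt]
  nlinarith [sq_nonneg (keyv idx hT r v)]

lemma hgt_key_lt (idx : V → ℕ) (hinj : Function.Injective idx) (hT : G.IsTree)
    (r : V) {a b : V} (hk : keyv idx hT r a < keyv idx hT r b) :
    hgt idx hT r a < hgt idx hT r b := by
  have h1 := hgt_lt_cube idx hinj hT r a
  have h2 : (keyv idx hT r a + 1)^3 ≤ (keyv idx hT r b)^3 :=
    Nat.pow_le_pow_left hk 3
  have h3 : (keyv idx hT r b)^3 ≤ hgt idx hT r b := by
    rw [hgt]; omega
  omega

lemma hgt_inj (idx : V → ℕ) (hinj : Function.Injective idx) (hT : G.IsTree)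
    (r : V) : Function.Injective (hgt idx hT r) := by
  intro a b hab
  have hK : keyv idx hT r a = keyv idx hT r b := by
    rcases lt_trichotomy (keyv idx hT r a) (keyv idx hT r b) with h | h | h
    · exact absurd hab (Nat.ne_of_lt (hgt_key_lt idx hinj hT r h))
    · exact h
    · exact absurd hab.symm (Nat.ne_of_lt (hgt_key_lt idx hinj hT r h))
  have hia := idx_le_keyv idx hT r a
  have hib := idx_le_keyv idx hT r b
  have hd : dep hT r a = dep hT r b := by
    rcases lt_trichotomy (dep hT r a) (dep hT r b) with h | h | h
    · exfalso
      rw [hgt, hgt, hK] at hab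
      nlinarith
    · exact h
    · exfalso
      rw [hgt, hgt, hK] at hab
      nlinarith
  rw [hgt, hgt, hK, hd] at hab
  exact hinj (by omega)

lemma hgt_parent_lt (idx : V → ℕ) (hinj : Function.Injective idx) (hT : G.IsTree)
    (r : V) {v : V} (hv : v ≠ r) :
    hgt idx hT r (parent hT r v) < hgt idx hT r v := by
  rcases lt_or_eq_of_le (keyv_parent_le idx hT r hv) with h | h
  · exact hgt_key_lt idx hinj hT r h
  · have hdp := dep_parent hT r hv
    have hip := idx_le_keyv idx hT r (parent hT r v)
    rw [hgt, hgt, h]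
    nlinarith [dep_le_keyv idx hinj hT r v]

end ChromAux

theorem unbounded_countable_tree_chromatically_equivalent_to_natTree
    {V : Type} [Countable V] (G : SimpleGraph V) (hT : G.IsTree)
    (hunbdd : ∀ n : ℕ, ∃ x y : V, n ≤ G.dist x y) :
    ∃ e : ∀ X : Type, Col G X ≃ Col natTree X,
      ∀ (X Y : Type) (f : X ↪ Y) (c : Col G X),
        e Y (Col.map f c) = Col.map f (e X c) := by
  classical
  obtain ⟨x0, -, -⟩ := hunbdd 0
  haveI : Nonempty V := ⟨x0⟩
  haveI hinfV : Infinite V := by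
    rw [← not_finite_iff_infinite]
    intro hfin
    haveI := Fintype.ofFinite V
    obtain ⟨x, y, hxy⟩ := hunbdd (Fintype.card V)
    obtain ⟨p, hp⟩ := hT.isConnected.exists_walk_length_eq_dist x y
    have h1 : G.dist x y ≤ p.bypass.length := SimpleGraph.dist_le _
    have h2 : p.bypass.length < Fintype.card V :=
      (SimpleGraph.Walk.bypass_isPath p).length_lt
    omega
  obtain ⟨e0⟩ : Nonempty (V ≃ ℕ) := nonempty_equiv_of_countable
  have hinj : Function.Injective ⇑e0 := e0.injective
  have hhinj : Function.Injective (ChromAux.hgt ⇑e0 hT x0) :=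
    ChromAux.hgt_inj ⇑e0 hinj hT x0
  haveI : Infinite (Set.range (ChromAux.hgt ⇑e0 hT x0)) :=
    (Set.infinite_range_of_injective hhinj).to_subtype
  let en : ℕ ≃o Set.range (ChromAux.hgt ⇑e0 hT x0) := Nat.Subtype.orderIsoOfNat _
  let we : ℕ ≃ V :=
    en.toEquiv.trans (Equiv.ofInjective (ChromAux.hgt ⇑e0 hT x0) hhinj).symm
  have hval : ∀ i, ChromAux.hgt ⇑e0 hT x0 (we i) = (en i : ℕ) := by
    intro i
    have h2 : (Equiv.ofInjective (ChromAux.hgt ⇑e0 hT x0) hhinj) (we i) = en i := by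
      simp [we]
    calc ChromAux.hgt ⇑e0 hT x0 (we i)
        = ((Equiv.ofInjective (ChromAux.hgt ⇑e0 hT x0) hhinj) (we i) : ℕ) := rfl
      _ = (en i : ℕ) := by rw [h2]
  have hlt : ∀ (a : V) (j : ℕ),
      ChromAux.hgt ⇑e0 hT x0 a < ChromAux.hgt ⇑e0 hT x0 (we j) → we.symm a < j := by
    intro a j hj
    have ha : ChromAux.hgt ⇑e0 hT x0 a = (en (we.symm a) : ℕ) := by
      rw [← hval (we.symm a), Equiv.apply_symm_apply]
    rw [ha, hval j] at hj
    exact en.lt_iff_lt.1 (Subtype.coe_lt_coe.1 hj)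
  have hw0 : we 0 = x0 := by
    by_contra hne
    have h1 := ChromAux.hgt_parent_lt ⇑e0 hinj hT x0 hne
    have h2 := hlt _ 0 h1
    omega
  have hner : ∀ j : ℕ, we (j+1) ≠ x0 := by
    intro j h
    rw [← hw0] at h
    exact (Nat.succ_ne_zero j) (we.injective h)
  have hpar : ∀ j, we.symm (ChromAux.parent hT x0 (we (j+1))) ≤ j := by
    intro j
    have h1 := ChromAux.hgt_parent_lt ⇑e0 hinj hT x0 (hner j)
    have h2 := hlt _ (j+1) h1
    omega
  have hadjp : ∀ j, G.Adj (we (j+1)) (we (we.symm (ChromAux.parent hT x0 (we (j+1))))) := by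
    intro j
    rw [Equiv.apply_symm_apply]
    exact ChromAux.adj_parent hT x0 (hner j)
  have hcover : ∀ a b, G.Adj a b → ∃ j,
      (a = we (j+1) ∧ b = we (we.symm (ChromAux.parent hT x0 (we (j+1))))) ∨
      (b = we (j+1) ∧ a = we (we.symm (ChromAux.parent hT x0 (we (j+1))))) := by
    have main : ∀ a b : V, G.Adj a b → b ≠ x0 → ChromAux.parent hT x0 b = a →
        ∃ j, b = we (j+1) ∧ a = we (we.symm (ChromAux.parent hT x0 (we (j+1)))) := by
      intro a b _ hbr hpb
      have hne0 : we.symm b ≠ 0 := by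
        intro h0
        apply hbr
        rw [← hw0, ← h0, Equiv.apply_symm_apply]
      have hsucc : we.symm b - 1 + 1 = we.symm b := by omega
      have hb' : we (we.symm b - 1 + 1) = b := by rw [hsucc, Equiv.apply_symm_apply]
      refine ⟨we.symm b - 1, hb'.symm, ?_⟩
      rw [Equiv.apply_symm_apply, hb', hpb]
    intro a b hab
    rcases ChromAux.adj_cover hT x0 hab with ⟨hbr, hpb⟩ | ⟨har, hpa⟩
    · obtain ⟨j, h1, h2⟩ := main a b hab hbr hpb
      exact ⟨j, Or.inr ⟨h1, h2⟩⟩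
    · obtain ⟨j, h1, h2⟩ := main b a hab.symm har hpa
      exact ⟨j, Or.inl ⟨h1, h2⟩⟩
  exact ChromAux.core we (fun j => we.symm (ChromAux.parent hT x0 (we j))) hpar hadjp hcover
end

section
/- Let G₁ and G₂ be countably infinite graphs with the same finite chromatic number n, and suppose the sets of proper n-colorings of G₁ and of G₂ have the same cardinality. Then for every k ≥ 1, G₁ and G₂ have the same number of stable partitions into k blocks, and hence G₁ and G₂ are chromatically equivalent (for every set X there are natural bijections between proper X-colorings). -/
open Cardinal

/-- A stable partition of a graph. -/
def IsStablePartition {V : Type*} (G : SimpleGraph V) (P : Set (Set V)) : Prop :=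
  Setoid.IsPartition P ∧ ∀ s ∈ P, ∀ v ∈ s, ∀ w ∈ s, ¬ G.Adj v w

section Aux
variable {V : Type} {X Y : Type}

/-- The block of `v` in a partition `P`. -/
noncomputable def blockOf {P : Set (Set V)} (hP : Setoid.IsPartition P) (v : V) : Set V :=
  ((hP.2 v).exists).choose

lemma blockOf_mem {P : Set (Set V)} (hP : Setoid.IsPartition P) (v : V) :
    blockOf hP v ∈ P := ((hP.2 v).exists).choose_spec.1

lemma mem_blockOf {P : Set (Set V)} (hP : Setoid.IsPartition P) (v : V) :
    v ∈ blockOf hP v := ((hP.2 v).exists).choose_spec.2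

lemma blockOf_eq {P : Set (Set V)} (hP : Setoid.IsPartition P) {v : V} {s : Set V}
    (hs : s ∈ P) (hv : v ∈ s) : blockOf hP v = s := by
  obtain ⟨b, _, hb⟩ := hP.2 v
  rw [hb _ ⟨blockOf_mem hP v, mem_blockOf hP v⟩, hb _ ⟨hs, hv⟩]

/-- The fibers of a function. -/
def fibers (c : V → X) : Set (Set V) := Set.range (fun v => c ⁻¹' {c v})

lemma fibers_isPartition (c : V → X) : Setoid.IsPartition (fibers c) := by
  constructor
  · rintro ⟨v, hv⟩
    exact absurd (hv ▸ rfl : v ∈ (∅ : Set V)) (by simp)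
  · intro v
    refine ⟨c ⁻¹' {c v}, ⟨⟨v, rfl⟩, rfl⟩, ?_⟩
    rintro s ⟨⟨w, rfl⟩, hv⟩
    ext u
    simp only [Set.mem_preimage, Set.mem_singleton_iff] at *
    rw [hv]

lemma fibers_stable {G : SimpleGraph V} (c : Col G X) :
    IsStablePartition G (fibers c.1) := by
  refine ⟨fibers_isPartition c.1, ?_⟩
  rintro s ⟨u, rfl⟩ v hv w hw hadj
  exact c.2 v w hadj (by simp only [Set.mem_preimage, Set.mem_singleton_iff] at hv hw; rw [hv, hw])

/-- The color of a fiber. -/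
noncomputable def colorOf (c : V → X) (s : ↥(fibers c)) : X := c s.2.choose

lemma colorOf_spec (c : V → X) (s : ↥(fibers c)) : (s : Set V) = c ⁻¹' {colorOf c s} :=
  s.2.choose_spec.symm

lemma colorOf_eq (c : V → X) (s : ↥(fibers c)) {v : V} (hv : v ∈ (s : Set V)) :
    colorOf c s = c v := by
  have := colorOf_spec c s
  rw [this] at hv
  simpa using hv.symm

lemma colorOf_injective (c : V → X) : Function.Injective (colorOf c) := by
  intro s t h
  apply Subtype.ext
  rw [colorOf_spec c s, colorOf_spec c t, h]

/-- Stable partitions. -/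
def SP {V : Type} (G : SimpleGraph V) := {P : Set (Set V) // IsStablePartition G P}

lemma SP.nonempty_of_mem {G : SimpleGraph V} (P : SP G) {s : Set V} (hs : s ∈ P.1) :
    s.Nonempty := by
  rcases Set.eq_empty_or_nonempty s with h | h
  · exact absurd (h ▸ hs) P.2.1.1
  · exact h

/-- The coloring associated to a stable partition and an injection of its blocks. -/
noncomputable def colOf {G : SimpleGraph V} (P : SP G) (f : ↥P.1 ↪ X) : Col G X :=
  ⟨fun v => f ⟨blockOf P.2.1 v, blockOf_mem P.2.1 v⟩, by
    intro v w hadj h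
    have h2 := f.injective h
    have h3 : blockOf P.2.1 v = blockOf P.2.1 w := congrArg Subtype.val h2
    exact P.2.2 _ (blockOf_mem P.2.1 v) v (mem_blockOf P.2.1 v) w
      (h3 ▸ mem_blockOf P.2.1 w) hadj⟩

lemma fibers_colOf {G : SimpleGraph V} (P : SP G) (f : ↥P.1 ↪ X) :
    fibers (colOf P f).1 = P.1 := by
  have key : ∀ v, (colOf P f).1 ⁻¹' {(colOf P f).1 v} = blockOf P.2.1 v := by
    intro v
    ext w
    simp only [Set.mem_preimage, Set.mem_singleton_iff, colOf]
    constructor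
    · intro h
      have h2 : blockOf P.2.1 w = blockOf P.2.1 v := congrArg Subtype.val (f.injective h)
      exact h2 ▸ mem_blockOf P.2.1 w
    · intro h
      congr 1
      exact Subtype.ext (blockOf_eq P.2.1 (blockOf_mem P.2.1 v) h)
  ext s
  constructor
  · rintro ⟨v, rfl⟩
    show (colOf P f).1 ⁻¹' {(colOf P f).1 v} ∈ P.1
    rw [key v]
    exact blockOf_mem P.2.1 v
  · intro hs
    obtain ⟨v, hv⟩ := SP.nonempty_of_mem P hs
    refine ⟨v, ?_⟩
    show (colOf P f).1 ⁻¹' {(colOf P f).1 v} = s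
    rw [key v, blockOf_eq P.2.1 hs hv]

lemma SPsigma_ext {G : SimpleGraph V} (a b : Σ P : SP G, (↥P.1 ↪ X))
    (h1 : a.1.1 = b.1.1)
    (h2 : ∀ s (hsa : s ∈ a.1.1) (hsb : s ∈ b.1.1), a.2 ⟨s, hsa⟩ = b.2 ⟨s, hsb⟩) : a = b := by
  obtain ⟨⟨Pa, ha⟩, fa⟩ := a
  obtain ⟨⟨Pb, hb⟩, fb⟩ := b
  dsimp at h1
  subst h1
  have hf : fa = fb := by
    apply DFunLike.ext
    rintro ⟨s, hs⟩
    exact h2 s hs hs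
  cases hf
  rfl

/-- The sigma decomposition of proper colorings. -/
noncomputable def sigmaEquiv {V : Type} (G : SimpleGraph V) (X : Type) :
    Col G X ≃ Σ P : SP G, (↥P.1 ↪ X) where
  toFun c := ⟨⟨fibers c.1, fibers_stable c⟩, ⟨colorOf c.1, colorOf_injective c.1⟩⟩
  invFun x := colOf x.1 x.2
  left_inv c := by
    apply Subtype.ext
    funext v
    show colorOf c.1 _ = c.1 v
    exact colorOf_eq c.1 _ (mem_blockOf (fibers_isPartition c.1) v)
  right_inv := by
    rintro ⟨⟨P, hP⟩, f⟩
    apply SPsigma_ext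
    · exact fibers_colOf ⟨P, hP⟩ f
    · intro s hsa hsb
      obtain ⟨v, hv⟩ := SP.nonempty_of_mem (⟨P, hP⟩ : SP G) hsb
      have h1 : colorOf (colOf ⟨P, hP⟩ f).1 ⟨s, hsa⟩ = (colOf ⟨P, hP⟩ f).1 v :=
        colorOf_eq _ _ hv
      have h2 : (colOf (⟨P, hP⟩ : SP G) f).1 v = f ⟨s, hsb⟩ := by
        show f _ = f _
        congr 1
        exact Subtype.ext (blockOf_eq hP.1 hsb hv)
      exact h1.trans h2

lemma sigmaEquiv_natural {G : SimpleGraph V} (f : X ↪ Y) (c : Col G X) :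
    sigmaEquiv G Y (Col.map f c) =
      ⟨(sigmaEquiv G X c).1, ((sigmaEquiv G X c).2).trans f⟩ := by
  apply SPsigma_ext
  · show fibers (f ∘ c.1) = fibers c.1
    unfold fibers
    have : (fun v => (f ∘ c.1) ⁻¹' {(f ∘ c.1) v}) = fun v => c.1 ⁻¹' {c.1 v} := by
      funext v
      ext w
      simp [f.injective.eq_iff]
    rw [this]
  · intro s hsa hsb
    have hs : s ∈ fibers (f ∘ c.1) := hsa
    obtain ⟨v, hv⟩ := SP.nonempty_of_mem ((sigmaEquiv G Y (Col.map f c)).1) hsa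
    have h1 : colorOf (f ∘ c.1) ⟨s, hsa⟩ = f (c.1 v) := colorOf_eq _ _ hv
    have h2 : colorOf c.1 ⟨s, hsb⟩ = c.1 v := colorOf_eq _ _ hv
    show colorOf (f ∘ c.1) ⟨s, hsa⟩ = f (colorOf c.1 ⟨s, hsb⟩)
    rw [h1, h2]

variable {G : SimpleGraph V} {n : ℕ}

lemma chrom_ge (hn : G.chromaticNumber = n) (P : SP G) : (n : Cardinal) ≤ #(↥P.1) := by
  by_contra hlt
  push_neg at hlt
  have hfin : #(↥P.1) < ℵ₀ := hlt.trans (nat_lt_aleph0 n)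
  obtain ⟨m, hm⟩ := Cardinal.lt_aleph0.1 hfin
  have hmn : m < n := by
    rw [hm] at hlt
    exact_mod_cast hlt
  have : #(↥P.1) = #(Fin m) := by rw [hm, Cardinal.mk_fin]
  obtain ⟨e⟩ := Cardinal.eq.1 this
  have c : Col G (Fin m) := colOf P e.toEmbedding
  have hcol : G.Colorable m := ⟨SimpleGraph.Coloring.mk c.1 (fun h => c.2 _ _ h)⟩
  have := hcol.chromaticNumber_le
  rw [hn] at this
  have : n ≤ m := by exact_mod_cast this
  omega

lemma card_fibers_eq (hn : G.chromaticNumber = n) (c : Col G (Fin n)) :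
    #(↥(fibers c.1)) = n := by
  refine le_antisymm ?_ (chrom_ge hn ⟨fibers c.1, fibers_stable c⟩)
  calc #(↥(fibers c.1)) ≤ #(Fin n) := mk_le_of_injective (colorOf_injective c.1)
  _ = n := Cardinal.mk_fin n

lemma blocks_le_aleph0 [Countable V] (P : SP G) : #(↥P.1) ≤ ℵ₀ := by
  have : Function.Injective (fun s : ↥P.1 => (SP.nonempty_of_mem P s.2).choose) := by
    intro s t h
    have h' : (SP.nonempty_of_mem P s.2).choose = (SP.nonempty_of_mem P t.2).choose := h
    have hs := (SP.nonempty_of_mem P s.2).choose_spec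
    have ht := (SP.nonempty_of_mem P t.2).choose_spec
    rw [h'] at hs
    exact Subtype.ext ((blockOf_eq P.2.1 s.2 hs).symm.trans (blockOf_eq P.2.1 t.2 ht))
  calc #(↥P.1) ≤ #V := mk_le_of_injective this
  _ ≤ ℵ₀ := Cardinal.mk_le_aleph0

/-- Stable partitions with `k` blocks (subtype matching the theorem statement). -/
def SPkT (G : SimpleGraph V) (k : Cardinal) :=
  {P : Set (Set V) // IsStablePartition G P ∧ #(↥P) = k}

noncomputable def colEquivFin (hn : G.chromaticNumber = n) :
    Col G (Fin n) ≃ (SPkT G n) × (Fin n ↪ Fin n) := by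
  refine (sigmaEquiv G (Fin n)).trans (Equiv.trans ?_ (Equiv.sigmaEquivProd _ _))
  refine Equiv.trans ?_
    (Equiv.sigmaCongrRight (β₁ := fun P : SPkT G n => (↥P.1 ↪ Fin n)) (fun P =>
      Equiv.embeddingCongr (Classical.choice (Cardinal.eq.1 (by
        rw [P.2.2, Cardinal.mk_fin] : #(↥P.1) = #(Fin n)))) (Equiv.refl (Fin n))))
  exact {
    toFun := fun x => ⟨⟨x.1.1, x.1.2, le_antisymm
      ((mk_le_of_injective x.2.injective).trans_eq (Cardinal.mk_fin n)) (chrom_ge hn x.1)⟩, x.2⟩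
    invFun := fun x => ⟨⟨x.1.1, x.1.2.1⟩, x.2⟩
    left_inv := fun _ => rfl
    right_inv := fun _ => rfl }

lemma mk_col_fin (hn : G.chromaticNumber = n) :
    #(Col G (Fin n)) = #(SPkT G n) * #(Fin n ↪ Fin n) := by
  rw [mk_congr (colEquivFin hn), Cardinal.mk_prod, Cardinal.lift_id, Cardinal.lift_id]

lemma cancel_mul_right {a b c : Cardinal} (hc : c ≠ 0) (hc' : c < ℵ₀) (h : a * c = b * c) :
    a = b := by
  rcases lt_or_ge a ℵ₀ with ha | ha
  · rcases lt_or_ge b ℵ₀ with hb | hb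
    · obtain ⟨a', rfl⟩ := Cardinal.lt_aleph0.1 ha
      obtain ⟨b', rfl⟩ := Cardinal.lt_aleph0.1 hb
      obtain ⟨c', rfl⟩ := Cardinal.lt_aleph0.1 hc'
      have hc0 : c' ≠ 0 := by simpa using hc
      have : a' * c' = b' * c' := by exact_mod_cast h
      exact_mod_cast Nat.eq_of_mul_eq_mul_right (Nat.pos_of_ne_zero hc0) this
    · exfalso
      have h1 : a * c < ℵ₀ := Cardinal.mul_lt_aleph0 ha hc'
      have h2 : b ≤ b * c := le_mul_right hc
      rw [h] at h1
      exact absurd (h2.trans_lt h1) (not_lt.2 hb)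
  · rcases lt_or_ge b ℵ₀ with hb | hb
    · exfalso
      have h1 : b * c < ℵ₀ := Cardinal.mul_lt_aleph0 hb hc'
      have h2 : a ≤ a * c := le_mul_right hc
      rw [← h] at h1
      exact absurd (h2.trans_lt h1) (not_lt.2 ha)
    · rw [Cardinal.mul_eq_left ha (hc'.le.trans ha) hc,
        Cardinal.mul_eq_left hb (hc'.le.trans hb) hc] at h
      exact h

end Aux

section Split
variable {V : Type} [Countable V] [Infinite V] {G : SimpleGraph V}

lemma split_inject (P₀ : SP G) {B : Set V} (hB : B ∈ P₀.1) (hBinf : B.Infinite)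
    (I : Type) [Countable I] (i₀ i₁ : I) (hne : i₀ ≠ i₁) :
    ∃ F : Set ℕ → SPkT G (#(↥(P₀.1 \ {B})) + #I), Function.Injective F := by
  have hBcard : #(ℕ ⊕ I) = #(↥B) := by
    haveI : Infinite ↥B := Set.infinite_coe_iff.2 hBinf
    rw [mk_eq_aleph0 ↥B, mk_eq_aleph0 (ℕ ⊕ I)]
  obtain ⟨e⟩ := Cardinal.eq.1 hBcard
  classical
  let g : Set ℕ → (ℕ ⊕ I) → I := fun S => Sum.elim (fun m => if m ∈ S then i₀ else i₁) id
  let bl : Set ℕ → I → Set V := fun S i => Subtype.val '' (e '' (g S ⁻¹' {i}))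
  have mem_bl : ∀ (S : Set ℕ) (x : ℕ ⊕ I) (i : I), (↑(e x) ∈ bl S i ↔ g S x = i) := by
    intro S x i
    constructor
    · rintro ⟨a, ⟨y, hy, rfl⟩, hval⟩
      have : y = x := e.injective (Subtype.val_injective hval)
      subst this
      exact hy
    · intro h
      exact ⟨e x, ⟨x, h, rfl⟩, rfl⟩
  have bl_sub : ∀ S i, bl S i ⊆ B := by
    rintro S i _ ⟨a, _, rfl⟩
    exact a.2
  have bl_nonempty : ∀ S i, (bl S i).Nonempty :=
    fun S i => ⟨↑(e (Sum.inr i)), (mem_bl S (Sum.inr i) i).2 rfl⟩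
  have bl_inj : ∀ S, Function.Injective (bl S) := by
    intro S i i' h
    have h1 := (mem_bl S (Sum.inr i) i).2 rfl
    rw [h] at h1
    exact (mem_bl S (Sum.inr i) i').1 h1
  let Pf : Set ℕ → Set (Set V) := fun S => (P₀.1 \ {B}) ∪ Set.range (bl S)
  have bl_ne_old : ∀ S i, bl S i ∉ P₀.1 \ {B} := by
    rintro S i ⟨hmem, hne'⟩
    obtain ⟨v, hv⟩ := bl_nonempty S i
    exact hne' ((P₀.2.1.2 v).unique ⟨hmem, hv⟩ ⟨hB, bl_sub S i hv⟩)
  have hpart : ∀ S, Setoid.IsPartition (Pf S) := by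
    intro S
    constructor
    · rintro (⟨h0, -⟩ | ⟨i, hi⟩)
      · exact P₀.2.1.1 h0
      · exact (bl_nonempty S i).ne_empty hi
    · intro v
      by_cases hv : v ∈ B
      · have hev : (↑(e (e.symm ⟨v, hv⟩)) : V) = v := by rw [e.apply_symm_apply]
        refine ⟨bl S (g S (e.symm ⟨v, hv⟩)), ⟨Or.inr ⟨_, rfl⟩, ?_⟩, ?_⟩
        · have hm := (mem_bl S (e.symm ⟨v, hv⟩) (g S (e.symm ⟨v, hv⟩))).2 rfl
          rwa [hev] at hm
        · rintro s ⟨hs | ⟨i, rfl⟩, hvs⟩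
          · exact absurd ((P₀.2.1.2 v).unique ⟨hs.1, hvs⟩ ⟨hB, hv⟩) hs.2
          · rw [← hev] at hvs
            rw [(mem_bl S _ _).1 hvs]
      · refine ⟨blockOf P₀.2.1 v, ⟨Or.inl ⟨blockOf_mem P₀.2.1 v, ?_⟩, mem_blockOf P₀.2.1 v⟩, ?_⟩
        · intro hBeq
          exact hv (hBeq ▸ mem_blockOf P₀.2.1 v)
        · rintro s ⟨hs | ⟨i, rfl⟩, hvs⟩
          · exact (blockOf_eq P₀.2.1 hs.1 hvs).symm
          · exact absurd (bl_sub S i hvs) hv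
  have hstable : ∀ S, IsStablePartition G (Pf S) := by
    intro S
    refine ⟨hpart S, ?_⟩
    rintro s (hs | ⟨i, rfl⟩) v hv w hw
    · exact P₀.2.2 s hs.1 v hv w hw
    · exact P₀.2.2 B hB v (bl_sub S i hv) w (bl_sub S i hw)
  have hcard : ∀ S, #(↥(Pf S)) = #(↥(P₀.1 \ {B})) + #I := by
    intro S
    have hdisj : Disjoint (P₀.1 \ {B}) (Set.range (bl S)) := by
      rw [Set.disjoint_left]
      rintro s hs ⟨i, rfl⟩
      exact bl_ne_old S i hs
    rw [show (↥(Pf S)) = ↥((P₀.1 \ {B}) ∪ Set.range (bl S)) from rfl,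
      mk_union_of_disjoint hdisj, mk_range_eq _ (bl_inj S)]
  refine ⟨fun S => ⟨Pf S, hstable S, hcard S⟩, ?_⟩
  intro S S' h
  have h' : Pf S = Pf S' := congrArg Subtype.val h
  have hw : (↑(e (Sum.inr i₀)) : V) ∈ bl S i₀ := (mem_bl S (Sum.inr i₀) i₀).2 rfl
  have hw' : (↑(e (Sum.inr i₀)) : V) ∈ bl S' i₀ := (mem_bl S' (Sum.inr i₀) i₀).2 rfl
  have hbb : bl S i₀ = bl S' i₀ := by
    refine ((hpart S).2 ↑(e (Sum.inr i₀))).unique ⟨Or.inr ⟨i₀, rfl⟩, hw⟩ ?_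
    rw [h']
    exact ⟨Or.inr ⟨i₀, rfl⟩, hw'⟩
  have key : ∀ (T : Set ℕ) (x : ℕ), ((↑(e (Sum.inl x)) : V) ∈ bl T i₀ ↔ x ∈ T) := by
    intro T x
    rw [mem_bl]
    show (if x ∈ T then i₀ else i₁) = i₀ ↔ x ∈ T
    by_cases hx : x ∈ T
    · simp [hx]
    · simp [hx, Ne.symm hne]
  ext x
  rw [← key S x, ← key S' x, hbb]

end Split

section Cont
variable {V : Type} [Countable V] [Infinite V] {G : SimpleGraph V} {n : ℕ}

omit [Infinite V] in
lemma spkt_le_continuum (G : SimpleGraph V) (k : Cardinal) : #(SPkT G k) ≤ 2 ^ ℵ₀ := by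
  have main : ∀ (P Q : SPkT G k),
      (fun v => blockOf P.2.1.1 v) = (fun v => blockOf Q.2.1.1 v) → P.1 ⊆ Q.1 := by
    intro P Q h s hs
    obtain ⟨v, hv⟩ := SP.nonempty_of_mem (⟨P.1, P.2.1⟩ : SP G) hs
    have h1 : blockOf P.2.1.1 v = s := blockOf_eq P.2.1.1 hs hv
    have h2 : blockOf Q.2.1.1 v = blockOf P.2.1.1 v := (congrFun h v).symm
    rw [← h1, ← h2]
    exact blockOf_mem Q.2.1.1 v
  have hinj : Function.Injective (fun P : SPkT G k => fun v => blockOf P.2.1.1 v) := by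
    intro P Q h
    exact Subtype.ext (subset_antisymm (main P Q h) (main Q P h.symm))
  calc #(SPkT G k) ≤ #(V → Set V) := mk_le_of_injective hinj
  _ = (2 ^ #V) ^ #V := by rw [mk_arrow, mk_set, Cardinal.lift_id, Cardinal.lift_id]
  _ = 2 ^ (#V * #V) := (power_mul).symm
  _ ≤ 2 ^ (ℵ₀ * ℵ₀) := power_le_power_left two_ne_zero (mul_le_mul' mk_le_aleph0 mk_le_aleph0)
  _ = 2 ^ ℵ₀ := by rw [aleph0_mul_aleph0]

lemma continuum_le_spkt (hn : G.chromaticNumber = n) {k : Cardinal}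
    (hk1 : (n : Cardinal) < k) (hk2 : k ≤ ℵ₀) : 2 ^ ℵ₀ ≤ #(SPkT G k) := by
  have hcol : G.Colorable n := (SimpleGraph.chromaticNumber_le_iff_colorable).1 (le_of_eq hn)
  obtain ⟨C⟩ := hcol
  have c₀ : Col G (Fin n) := ⟨C, fun v w h => C.valid h⟩
  set P₀ : SP G := ⟨fibers c₀.1, fibers_stable c₀⟩ with hP₀def
  have hP₀ : #(↥P₀.1) = n := card_fibers_eq hn c₀
  obtain ⟨B, hB, hBinf⟩ : ∃ B ∈ P₀.1, B.Infinite := by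
    by_contra hfin
    push_neg at hfin
    have hPfin : (P₀.1).Finite := lt_aleph0_iff_set_finite.1 (hP₀ ▸ nat_lt_aleph0 n)
    have : (⋃₀ P₀.1).Finite :=
      Set.Finite.sUnion hPfin (fun t ht => (hfin t ht))
    rw [P₀.2.1.sUnion_eq_univ] at this
    exact Set.infinite_univ this
  have hd : #(↥(P₀.1 \ {B})) + 1 = n := by
    have := mk_diff_add_mk (Set.singleton_subset_iff.2 hB)
    rwa [Cardinal.mk_singleton, hP₀] at this
  set d := #(↥(P₀.1 \ {B})) with hddef
  have hdle : d ≤ ℵ₀ := by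
    have : d ≤ d + 1 := self_le_add_right d 1
    rw [hd] at this
    exact this.trans (nat_lt_aleph0 n).le
  rcases lt_or_eq_of_le hk2 with hklt | hkeq
  · -- k is a finite natural > n
    obtain ⟨j, rfl⟩ := Cardinal.lt_aleph0.1 hklt
    have hnj : n < j := by exact_mod_cast hk1
    obtain ⟨F, hF⟩ := split_inject P₀ hB hBinf (Fin (j - n + 1))
      ⟨0, by omega⟩ ⟨1, by omega⟩ (by intro h; simpa using congrArg Fin.val h)
    have hcd : d + #(Fin (j - n + 1)) = (j : Cardinal) := by
      rw [Cardinal.mk_fin]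
      have : ((j - n + 1 : ℕ) : Cardinal) = 1 + ((j - n : ℕ) : Cardinal) := by
        push_cast
        ring
      rw [this, ← add_assoc, hd]
      rw [← Nat.cast_add]
      congr 1
      omega
    rw [← hcd]
    calc (2 : Cardinal) ^ ℵ₀ = #(Set ℕ) := by rw [mk_set, mk_nat]
    _ ≤ #(SPkT G (d + #(Fin (j - n + 1)))) := mk_le_of_injective hF
  · -- k = ℵ₀
    obtain ⟨F, hF⟩ := split_inject P₀ hB hBinf ℕ 0 1 (by omega)
    have hcd : d + #ℕ = k := by
      rw [mk_nat, hkeq]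
      exact Cardinal.add_eq_right le_rfl hdle
    rw [← hcd]
    calc (2 : Cardinal) ^ ℵ₀ = #(Set ℕ) := by rw [mk_set, mk_nat]
    _ ≤ #(SPkT G (d + #ℕ)) := mk_le_of_injective hF

omit [Infinite V] in
lemma mk_spkt_of_lt (hn : G.chromaticNumber = n) {k : Cardinal} (hk : k < n) :
    #(SPkT G k) = 0 := by
  rw [Cardinal.mk_eq_zero_iff]
  refine ⟨fun P => ?_⟩
  have := chrom_ge hn ⟨P.1, P.2.1⟩
  rw [P.2.2] at this
  exact absurd hk (not_lt.2 this)

omit [Infinite V] in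
lemma mk_spkt_of_gt {k : Cardinal} (hk : ℵ₀ < k) : #(SPkT G k) = 0 := by
  rw [Cardinal.mk_eq_zero_iff]
  refine ⟨fun P => ?_⟩
  have := blocks_le_aleph0 (⟨P.1, P.2.1⟩ : SP G)
  rw [P.2.2] at this
  exact absurd hk (not_lt.2 this)

end Cont

section MainAux
variable {V₁ V₂ : Type} [Countable V₁] [Infinite V₁] [Countable V₂] [Infinite V₂]
  {G₁ : SimpleGraph V₁} {G₂ : SimpleGraph V₂} {n : ℕ}

lemma spkt_card_eq (h₁ : G₁.chromaticNumber = n) (h₂ : G₂.chromaticNumber = n)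
    (hcard : #(Col G₁ (Fin n)) = #(Col G₂ (Fin n))) (k : Cardinal) :
    #(SPkT G₁ k) = #(SPkT G₂ k) := by
  rcases lt_or_ge ℵ₀ k with hk | hk
  · rw [mk_spkt_of_gt hk, mk_spkt_of_gt hk]
  rcases lt_trichotomy k ((n : ℕ) : Cardinal) with hlt | heq | hgt
  · rw [mk_spkt_of_lt h₁ hlt, mk_spkt_of_lt h₂ hlt]
  · subst heq
    rw [mk_col_fin h₁, mk_col_fin h₂] at hcard
    refine cancel_mul_right ?_ ?_ hcard
    · rw [Cardinal.mk_ne_zero_iff]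
      exact ⟨Function.Embedding.refl _⟩
    · exact lt_aleph0_of_finite _
  · exact le_antisymm ((spkt_le_continuum G₁ k).trans (continuum_le_spkt h₂ hgt hk))
      ((spkt_le_continuum G₂ k).trans (continuum_le_spkt h₁ hgt hk))

end MainAux

noncomputable def spSigma {V : Type} (G : SimpleGraph V) : SP G ≃ Σ k : Cardinal, SPkT G k where
  toFun P := ⟨#(↥P.1), ⟨P.1, P.2, rfl⟩⟩
  invFun x := ⟨x.2.1, x.2.2.1⟩
  left_inv P := rfl
  right_inv := by
    rintro ⟨k, P, hP, hk⟩
    subst hk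
    rfl

theorem finite_chromatic_number_determines_chromatic_functor
    {V₁ V₂ : Type} [Countable V₁] [Infinite V₁] [Countable V₂] [Infinite V₂]
    (G₁ : SimpleGraph V₁) (G₂ : SimpleGraph V₂) (n : ℕ)
    (h₁ : G₁.chromaticNumber = n) (h₂ : G₂.chromaticNumber = n)
    (hcard : Cardinal.mk (Col G₁ (Fin n)) = Cardinal.mk (Col G₂ (Fin n))) :
    (∀ k : Cardinal, 1 ≤ k →
      Cardinal.mk {P : Set (Set V₁) // IsStablePartition G₁ P ∧ Cardinal.mk ↥P = k} =
      Cardinal.mk {P : Set (Set V₂) // IsStablePartition G₂ P ∧ Cardinal.mk ↥P = k}) ∧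
    ∃ e : ∀ X : Type, Col G₁ X ≃ Col G₂ X,
      ∀ (X Y : Type) (f : X ↪ Y) (c : Col G₁ X),
        e Y (Col.map f c) = Col.map f (e X c) := by
  have part1 : ∀ k : Cardinal, #(SPkT G₁ k) = #(SPkT G₂ k) := spkt_card_eq h₁ h₂ hcard
  refine ⟨fun k _ => part1 k, ?_⟩
  have F : ∀ k : Cardinal, SPkT G₁ k ≃ SPkT G₂ k :=
    fun k => Classical.choice (Cardinal.eq.1 (part1 k))
  let t : SP G₁ ≃ SP G₂ :=
    (spSigma G₁).trans ((Equiv.sigmaCongrRight F).trans (spSigma G₂).symm)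
  have hcardt : ∀ P : SP G₁, #(↥P.1) = #(↥(t P).1) :=
    fun P => ((F (#(↥P.1))) ⟨P.1, P.2, rfl⟩).2.2.symm
  have u : ∀ P : SP G₁, ↥P.1 ≃ ↥(t P).1 :=
    fun P => Classical.choice (Cardinal.eq.1 (hcardt P))
  let mid : ∀ X : Type, (Σ P : SP G₁, (↥P.1 ↪ X)) ≃ (Σ Q : SP G₂, (↥Q.1 ↪ X)) := fun X =>
    Equiv.sigmaCongr t (fun P =>
      { toFun := fun g => (u P).symm.toEmbedding.trans g
        invFun := fun h => (u P).toEmbedding.trans h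
        left_inv := fun g => by
          ext s
          simp
        right_inv := fun h => by
          ext s
          simp })
  have midnat : ∀ (X Y : Type) (f : X ↪ Y) (x : Σ P : SP G₁, (↥P.1 ↪ X)),
      mid Y ⟨x.1, x.2.trans f⟩ = ⟨(mid X x).1, (mid X x).2.trans f⟩ := by
    rintro X Y f ⟨P, g⟩
    rfl
  refine ⟨fun X => (sigmaEquiv G₁ X).trans ((mid X).trans (sigmaEquiv G₂ X).symm), ?_⟩
  intro X Y f c
  show (sigmaEquiv G₂ Y).symm ((mid Y) ((sigmaEquiv G₁ Y) (Col.map f c))) =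
    Col.map f ((sigmaEquiv G₂ X).symm ((mid X) ((sigmaEquiv G₁ X) c)))
  rw [sigmaEquiv_natural f c]
  apply (sigmaEquiv G₂ Y).injective
  rw [Equiv.apply_symm_apply,
    sigmaEquiv_natural f ((sigmaEquiv G₂ X).symm ((mid X) ((sigmaEquiv G₁ X) c))),
    Equiv.apply_symm_apply]
  exact midnat X Y f ((sigmaEquiv G₁ X) c)
end

section
/- Let X be an infinite set, e₀ = {x₀,x₁} an edge of the complete graph K_X, and K_X' the graph obtained by deleting e₀. Then K_X' has exactly two stable partitions: the partition into singletons, and the partition whose blocks are {x₀,x₁} together with all remaining singletons. Consequently, K_X and K_X' are not chromatically equivalent: there is no natural (in injections of color sets) family of bijections between their proper X-colorings for all sets X. -/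
lemma aux_adj {X : Type} (x₀ x₁ v w : X) :
    ((⊤ : SimpleGraph X).deleteEdges {s(x₀, x₁)}).Adj v w ↔
      v ≠ w ∧ s(v, w) ≠ s(x₀, x₁) := by
  simp [SimpleGraph.deleteEdges_adj]

theorem complete_minus_edge_not_chromatically_equivalent
    {X : Type} [Infinite X] (x₀ x₁ : X) (hne : x₀ ≠ x₁) :
    ({P : Set (Set X) | IsStablePartition ((⊤ : SimpleGraph X).deleteEdges {s(x₀, x₁)}) P} =
      {{s : Set X | ∃ x : X, s = {x}},
        insert {x₀, x₁} {s : Set X | ∃ x : X, x ≠ x₀ ∧ x ≠ x₁ ∧ s = {x}}}) ∧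
    ¬ ∃ e : ∀ Z : Type, Col (⊤ : SimpleGraph X) Z ≃
          Col ((⊤ : SimpleGraph X).deleteEdges {s(x₀, x₁)}) Z,
        ∀ (Z W : Type) (f : Z ↪ W) (c : Col (⊤ : SimpleGraph X) Z),
          e W (Col.map f c) = Col.map f (e Z c) := by
  constructor
  · ext P
    simp only [Set.mem_setOf_eq, Set.mem_insert_iff, Set.mem_singleton_iff]
    constructor
    · rintro ⟨⟨hne0, hpart⟩, hstab⟩
      -- every block consists of elements pairwise equal or forming the pair {x₀,x₁}
      have hblk : ∀ s ∈ P, ∀ v ∈ s, ∀ w ∈ s, v = w ∨ s(v, w) = s(x₀, x₁) := by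
        intro s hs v hv w hw
        have := hstab s hs v hv w hw
        rw [aux_adj] at this
        by_contra h
        push_neg at h
        exact this ⟨h.1, h.2⟩
      obtain ⟨b, ⟨hbP, hx₀b⟩, hbuniq⟩ := hpart x₀
      by_cases hx₁b : x₁ ∈ b
      · right
        have hbeq : b = {x₀, x₁} := by
          ext v
          constructor
          · intro hv
            rcases hblk b hbP v hv x₀ hx₀b with h | h
            · exact Or.inl h
            · rcases Sym2.eq_iff.mp h with ⟨h1, h2⟩ | ⟨h1, h2⟩
              · exact Or.inl h1
              · exact Or.inr h1
          · rintro (rfl | rfl)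
            · exact hx₀b
            · exact hx₁b
        ext s
        simp only [Set.mem_insert_iff, Set.mem_setOf_eq]
        constructor
        · intro hs
          have hsne : s.Nonempty := Set.nonempty_iff_ne_empty.mpr (fun h => hne0 (h ▸ hs))
          obtain ⟨a, ha⟩ := hsne
          by_cases ha0 : a = x₀
          · left
            subst ha0
            rw [← hbeq]
            exact (hbuniq s ⟨hs, ha⟩)
          by_cases ha1 : a = x₁
          · left
            obtain ⟨b', ⟨hb'P, hx₁b'⟩, hb'uniq⟩ := hpart x₁
            have h1 : s = b' := hb'uniq s ⟨hs, ha1 ▸ ha⟩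
            have h2 : b = b' := hb'uniq b ⟨hbP, hx₁b⟩
            rw [h1, ← h2]
            exact hbeq
          · right
            refine ⟨a, ha0, ha1, ?_⟩
            ext v
            simp only [Set.mem_singleton_iff]
            constructor
            · intro hv
              rcases hblk s hs v hv a ha with h | h
              · exact h
              · exfalso
                rcases Sym2.eq_iff.mp h with ⟨h1, h2⟩ | ⟨h1, h2⟩
                · exact ha1 h2
                · exact ha0 h2
            · rintro rfl; exact ha
        · rintro (rfl | ⟨x, hx0, hx1, rfl⟩)
          · rw [← hbeq]; exact hbP
          · obtain ⟨c, ⟨hcP, hxc⟩, hcuniq⟩ := hpart x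
            have : c = {x} := by
              ext v
              simp only [Set.mem_singleton_iff]
              constructor
              · intro hv
                rcases hblk c hcP v hv x hxc with h | h
                · exact h
                · exfalso
                  rcases Sym2.eq_iff.mp h with ⟨h1, h2⟩ | ⟨h1, h2⟩
                  · exact hx1 h2
                  · exact hx0 h2
              · rintro rfl; exact hxc
            rw [← this]; exact hcP
      · left
        ext s
        simp only [Set.mem_setOf_eq]
        constructor
        · intro hs
          have hsne : s.Nonempty := Set.nonempty_iff_ne_empty.mpr (fun h => hne0 (h ▸ hs))
          obtain ⟨a, ha⟩ := hsne
          refine ⟨a, ?_⟩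
          ext v
          simp only [Set.mem_singleton_iff]
          constructor
          · intro hv
            rcases hblk s hs v hv a ha with h | h
            · exact h
            · exfalso
              -- then x₀, x₁ ∈ s, so s = b, contradicting x₁ ∉ b
              have hx0s : x₀ ∈ s ∧ x₁ ∈ s := by
                rcases Sym2.eq_iff.mp h with ⟨h1, h2⟩ | ⟨h1, h2⟩
                · subst h1; subst h2; exact ⟨hv, ha⟩
                · subst h1; subst h2; exact ⟨ha, hv⟩
              have := hbuniq s ⟨hs, hx0s.1⟩
              exact hx₁b (this ▸ hx0s.2)
          · rintro rfl; exact ha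
        · rintro ⟨x, rfl⟩
          obtain ⟨c, ⟨hcP, hxc⟩, hcuniq⟩ := hpart x
          have : c = {x} := by
            ext v
            simp only [Set.mem_singleton_iff]
            constructor
            · intro hv
              rcases hblk c hcP v hv x hxc with h | h
              · exact h
              · exfalso
                have hx0s : x₀ ∈ c ∧ x₁ ∈ c := by
                  rcases Sym2.eq_iff.mp h with ⟨h1, h2⟩ | ⟨h1, h2⟩
                  · subst h1; subst h2; exact ⟨hv, hxc⟩
                  · subst h1; subst h2; exact ⟨hxc, hv⟩
                have := hbuniq c ⟨hcP, hx0s.1⟩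
                exact hx₁b (this ▸ hx0s.2)
            · rintro rfl; exact hxc
          rw [← this]; exact hcP
    · rintro (rfl | rfl)
      · -- singletons form a stable partition
        refine ⟨⟨?_, ?_⟩, ?_⟩
        · rintro ⟨x, hx⟩
          exact (Set.singleton_nonempty x).ne_empty hx.symm
        · intro a
          refine ⟨{a}, ⟨⟨a, rfl⟩, rfl⟩, ?_⟩
          rintro s ⟨⟨x, rfl⟩, ha⟩
          simp only [Set.mem_singleton_iff] at ha
          rw [ha]
        · rintro s ⟨x, rfl⟩ v hv w hw
          simp only [Set.mem_singleton_iff] at hv hw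
          subst hv; subst hw
          rw [aux_adj]
          rintro ⟨h, -⟩
          exact h rfl
      · refine ⟨⟨?_, ?_⟩, ?_⟩
        · rintro (h | ⟨x, -, -, hx⟩)
          · exact (Set.insert_nonempty x₀ {x₁}).ne_empty h.symm
          · exact (Set.singleton_nonempty x).ne_empty hx.symm
        · intro a
          by_cases ha : a = x₀ ∨ a = x₁
          · refine ⟨{x₀, x₁}, ⟨Set.mem_insert _ _, ?_⟩, ?_⟩
            · rcases ha with rfl | rfl
              · exact Set.mem_insert _ _
              · exact Set.mem_insert_of_mem _ rfl
            · rintro s ⟨hs, has⟩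
              rcases hs with rfl | ⟨x, hx0, hx1, rfl⟩
              · rfl
              · simp only [Set.mem_singleton_iff] at has
                subst has
                rcases ha with rfl | rfl
                · exact absurd rfl hx0
                · exact absurd rfl hx1
          · push_neg at ha
            refine ⟨{a}, ⟨Set.mem_insert_of_mem _ ⟨a, ha.1, ha.2, rfl⟩, rfl⟩, ?_⟩
            rintro s ⟨hs, has⟩
            rcases hs with rfl | ⟨x, hx0, hx1, rfl⟩
            · rcases has with rfl | has
              · exact absurd rfl ha.1
              · simp only [Set.mem_singleton_iff] at has
                exact absurd has ha.2
            · simp only [Set.mem_singleton_iff] at has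
              rw [has]
        · rintro s (rfl | ⟨x, -, -, rfl⟩) v hv w hw
          · rw [aux_adj]
            rintro ⟨hvw, hs⟩
            apply hs
            rcases hv with rfl | hv
            · rcases hw with rfl | hw
              · exact absurd rfl hvw
              · simp only [Set.mem_singleton_iff] at hw
                subst hw; rfl
            · simp only [Set.mem_singleton_iff] at hv
              subst hv
              rcases hw with rfl | hw
              · rw [Sym2.eq_swap]
              · simp only [Set.mem_singleton_iff] at hw
                subst hw
                exact absurd rfl hvw
          · simp only [Set.mem_singleton_iff] at hv hw
            subst hv; subst hw
            rw [aux_adj]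
            rintro ⟨h, -⟩
            exact h rfl
  · classical
    rintro ⟨e, hnat⟩
    -- identity coloring of the complete graph
    have hidprop : ∀ v w, (⊤ : SimpleGraph X).Adj v w → (id v : X) ≠ id w :=
      fun v w h => h.ne
    set c₀ : Col (⊤ : SimpleGraph X) X := ⟨id, hidprop⟩ with hc₀
    set u := e X c₀ with hu
    have key : ∀ c : Col (⊤ : SimpleGraph X) X, (e X c).1 = c.1 ∘ u.1 := by
      intro c
      have hinj : Function.Injective c.1 := by
        intro v w h
        by_contra hvw
        exact c.2 v w (by simpa using hvw) h
      have hc : c = Col.map ⟨c.1, hinj⟩ c₀ := Subtype.ext rfl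
      rw [hc, hnat X X ⟨c.1, hinj⟩ c₀]
      rfl
    -- injective coloring of the deleted graph: identity
    have hd₁prop : ∀ v w, ((⊤ : SimpleGraph X).deleteEdges {s(x₀, x₁)}).Adj v w →
        (id v : X) ≠ id w := fun v w h => ((aux_adj x₀ x₁ v w).mp h).1
    set d₁ : Col ((⊤ : SimpleGraph X).deleteEdges {s(x₀, x₁)}) X := ⟨id, hd₁prop⟩
    have huinj : Function.Injective u.1 := by
      have h := key ((e X).symm d₁)
      rw [Equiv.apply_symm_apply] at h
      have : Function.Injective (((e X).symm d₁).1 ∘ u.1) := by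
        rw [← h]; exact fun a b hab => hab
      exact Function.Injective.of_comp this
    -- collapsing coloring
    have hd₂prop : ∀ v w, ((⊤ : SimpleGraph X).deleteEdges {s(x₀, x₁)}).Adj v w →
        (if v = x₁ then x₀ else v) ≠ (if w = x₁ then x₀ else w) := by
      intro v w h
      obtain ⟨hvw, hs⟩ := (aux_adj x₀ x₁ v w).mp h
      by_cases hv : v = x₁
      · by_cases hw : w = x₁
        · exact absurd (hv.trans hw.symm) hvw
        · simp only [if_pos hv, if_neg hw]
          intro hc
          exact hs (by rw [hv, ← hc, Sym2.eq_swap])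
      · by_cases hw : w = x₁
        · simp only [if_neg hv, if_pos hw]
          intro hc
          exact hs (by rw [hc, hw])
        · simp only [if_neg hv, if_neg hw]; exact hvw
    set d₂ : Col ((⊤ : SimpleGraph X).deleteEdges {s(x₀, x₁)}) X :=
      ⟨fun v => if v = x₁ then x₀ else v, hd₂prop⟩ with hd₂
    set c₂ := (e X).symm d₂ with hc₂
    have h2 := key c₂
    rw [hc₂, Equiv.apply_symm_apply] at h2
    have hc₂inj : Function.Injective c₂.1 := by
      intro v w h
      by_contra hvw
      exact c₂.2 v w (by simpa using hvw) h
    have heq : u.1 x₀ = u.1 x₁ := by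
      apply hc₂inj
      have h0 : d₂.1 x₀ = c₂.1 (u.1 x₀) := congrFun h2 x₀
      have h1 : d₂.1 x₁ = c₂.1 (u.1 x₁) := congrFun h2 x₁
      rw [← h0, ← h1, hd₂]
      simp [hne]
    exact hne (huinj heq)
end
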